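/- arXiv:1902.02998 — 4 statements merged into one kernel-verified Lean document; each statement's English description precedes it below -/
import Mathlib

section
/- Every optimal independent broadcast on a finite connected simple graph G with at least 2 vertices is a dominating broadcast, i.e., for every vertex w of G there exists an f-broadcast vertex u with d_G(u,w) ≤ f(u). -/
noncomputable section

open scoped Classical

variable {V : Type*}

/-- A pendent vertex (leaf): a vertex with exactly one neighbour. -/
def SimpleGraph.IsLeafVert (G : SimpleGraph V) (v : V) : Prop :=
  (G.neighborSet v).ncard = 1

/-- The eccentricity of a vertex: the maximum distance from it to any vertex. -/
def ecc [Fintype V] (G : SimpleGraph V) (v : V) : ℕ :=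
  Finset.univ.sup fun u => G.dist v u

/-- The diameter of a graph: the maximum eccentricity. -/
def gdiam [Fintype V] (G : SimpleGraph V) : ℕ :=
  Finset.univ.sup fun v => ecc G v

/-- A broadcast on `G`: `f v ≤ e_G(v)` for every vertex `v`. -/
def IsBroadcast [Fintype V] (G : SimpleGraph V) (f : V → ℕ) : Prop :=
  ∀ v, f v ≤ ecc G v

/-- The cost of a broadcast. -/
def bcost [Fintype V] (f : V → ℕ) : ℕ :=
  ∑ v, f v

/-- An independent broadcast: a broadcast such that every two distinct broadcast
vertices `u, v` satisfy `d_G(u,v) > max (f u) (f v)`. -/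
def IsIndepBroadcast [Fintype V] (G : SimpleGraph V) (f : V → ℕ) : Prop :=
  IsBroadcast G f ∧
    ∀ u v : V, u ≠ v → 0 < f u → 0 < f v → max (f u) (f v) < G.dist u v

/-- The broadcast independence number: maximum cost of an independent broadcast. -/
def betaB [Fintype V] (G : SimpleGraph V) : ℕ :=
  sSup {c : ℕ | ∃ f : V → ℕ, IsIndepBroadcast G f ∧ bcost f = c}

/-- A dominating broadcast: every vertex is within distance `f u` of some
broadcast vertex `u`. -/
def IsDominatingBroadcast [Fintype V] (G : SimpleGraph V) (f : V → ℕ) : Prop :=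
  ∀ w : V, ∃ u : V, 0 < f u ∧ G.dist u w ≤ f u

/-- A graph is a (nonempty) path graph if its vertices can be enumerated
`w_0, …, w_n` with adjacency exactly between consecutive vertices. -/
def IsPathGraph {W : Type*} (P : SimpleGraph W) : Prop :=
  ∃ (n : ℕ) (e : W ≃ Fin (n + 1)),
    ∀ a b : W, P.Adj a b ↔ ((e a : ℕ) + 1 = (e b : ℕ) ∨ (e b : ℕ) + 1 = (e a : ℕ))

/-- The set of non-leaf vertices. -/
def nonleaves (G : SimpleGraph V) : Set V :=
  {v | ¬ G.IsLeafVert v}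

/-- The graph obtained from `G` by deleting all its leaves. -/
def pruned (G : SimpleGraph V) : SimpleGraph (nonleaves G) :=
  SimpleGraph.induce (nonleaves G) G

/-- A caterpillar: a tree such that deleting all leaves yields a nonempty path. -/
def IsCaterpillar (G : SimpleGraph V) : Prop :=
  G.IsTree ∧ IsPathGraph (pruned G)

/-- A lobster: a tree such that deleting all leaves yields a caterpillar. -/
def IsLobster (G : SimpleGraph V) : Prop :=
  G.IsTree ∧ IsCaterpillar (pruned G)

/-- The set of spine vertices of a lobster: the vertices remaining after
deleting all leaves and then all leaves of the resulting caterpillar. -/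
def spineSet (G : SimpleGraph V) : Set V :=
  {x | ∃ h : x ∈ nonleaves G, (⟨x, h⟩ : nonleaves G) ∈ nonleaves (pruned G)}

/-- An enumeration `v 0, …, v k` of the spine of a lobster as a path. -/
structure SpineEnum (G : SimpleGraph V) (k : ℕ) where
  v : ℕ → V
  inj : ∀ i ≤ k, ∀ j ≤ k, v i = v j → i = j
  mem : ∀ x : V, x ∈ spineSet G ↔ ∃ i ≤ k, v i = x
  adj : ∀ i ≤ k, ∀ j ≤ k, (G.Adj (v i) (v j) ↔ i + 1 = j ∨ j + 1 = i)

/-- The graph obtained from `G` by deleting all spine edges. -/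
def offSpine (G : SimpleGraph V) : SimpleGraph V :=
  G.deleteEdges {e : Sym2 V | ∀ x ∈ e, x ∈ spineSet G}

/-- The vertex set of the spine-subtree rooted at `u`: the connected component
of `u` after deleting all spine edges. -/
def Ssub (G : SimpleGraph V) (u : V) : Set V :=
  {x | (offSpine G).Reachable u x}

/-- `f*(S_u)`: the sum of the values of `f` on the spine-subtree rooted at `u`. -/
def fstar (G : SimpleGraph V) (f : V → ℕ) (u : V) : ℕ :=
  ∑ᶠ x ∈ Ssub G u, f x

/-- A spine-subtree rooted at `u` is of type S1 if every leaf in it is at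
distance 1 from `u`. -/
def typeS1 (G : SimpleGraph V) (u : V) : Prop :=
  ∀ x ∈ Ssub G u, G.IsLeafVert x → G.dist u x = 1

/-- A spine-subtree rooted at `u` is of type S2 if every leaf in it is at
distance 2 from `u`. -/
def typeS2 (G : SimpleGraph V) (u : V) : Prop :=
  ∀ x ∈ Ssub G u, G.IsLeafVert x → G.dist u x = 2

/-- A lobster is locally uniform if every spine-subtree is of type S1 or S2. -/
def LocallyUniform (G : SimpleGraph V) {k : ℕ} (s : SpineEnum G k) : Prop :=
  ∀ i ≤ k, typeS1 G (s.v i) ∨ typeS2 G (s.v i)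

/-- The roots of the branches of the spine-subtree rooted at `u`:
the non-spine neighbours of `u`. -/
def branchRoots (G : SimpleGraph V) (u : V) : Set V :=
  (offSpine G).neighborSet u

/-- A 2-lobster: every spine-subtree has at least two branches. -/
def IsTwoLobster (G : SimpleGraph V) {k : ℕ} (s : SpineEnum G k) : Prop :=
  ∀ i ≤ k, 2 ≤ (branchRoots G (s.v i)).ncard

/-- The 1-leaves of the spine-subtree rooted at `u`. -/
def oneLeaves (G : SimpleGraph V) (u : V) : Set V :=
  {x | x ∈ Ssub G u ∧ G.IsLeafVert x ∧ G.dist u x = 1}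

/-- The 2-leaves of the spine-subtree rooted at `u`. -/
def twoLeaves (G : SimpleGraph V) (u : V) : Set V :=
  {x | x ∈ Ssub G u ∧ G.IsLeafVert x ∧ G.dist u x = 2}

/-- An only-leaf: a leaf whose neighbour has exactly one leaf neighbour. -/
def IsOnlyLeaf (G : SimpleGraph V) (x : V) : Prop :=
  G.IsLeafVert x ∧ ∀ y : V, G.Adj x y → {z | G.Adj y z ∧ G.IsLeafVert z}.ncard = 1

/-- The 2-only-leaves of the spine-subtree rooted at `u`. -/
def twoOnlyLeaves (G : SimpleGraph V) (u : V) : Set V :=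
  {x | x ∈ twoLeaves G u ∧ IsOnlyLeaf G x}

/-- `λ1(S_u)`: the number of 1-leaves of the spine-subtree rooted at `u`. -/
def lam1 (G : SimpleGraph V) (u : V) : ℕ := (oneLeaves G u).ncard

/-- `λ2(S_u)`: the number of 2-leaves of the spine-subtree rooted at `u`. -/
def lam2 (G : SimpleGraph V) (u : V) : ℕ := (twoLeaves G u).ncard

/-- `λ2*(S_u)`: the number of 2-only-leaves of the spine-subtree rooted at `u`. -/
def lam2star (G : SimpleGraph V) (u : V) : ℕ := (twoOnlyLeaves G u).ncard

/-- The 2-leaves of the branch of `S_u` rooted at the neighbour `w` of `u`. -/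
def branchTwoLeaves (G : SimpleGraph V) (u w : V) : Set V :=
  {x | G.Adj w x ∧ x ≠ u ∧ G.IsLeafVert x}

/-- The branches of `S_u` having at most two 2-leaves. -/
def smallBranches (G : SimpleGraph V) (u : V) : Set V :=
  {w | w ∈ branchRoots G u ∧ (branchTwoLeaves G u w).ncard ≤ 2}

/-- `α2*(S_u)`: the number of branches of `S_u` containing no 1-leaf
(type B2) and having at most two 2-leaves. -/
def alpha2star (G : SimpleGraph V) (u : V) : ℕ :=
  {w | w ∈ branchRoots G u ∧ ¬ G.IsLeafVert w ∧
    (branchTwoLeaves G u w).ncard ≤ 2}.ncard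

/-- Type F_A: type S2 and every branch has at least three 2-leaves. -/
def typeFA (G : SimpleGraph V) (u : V) : Prop :=
  typeS2 G u ∧ ∀ w ∈ branchRoots G u, 3 ≤ (branchTwoLeaves G u w).ncard

/-- Type X_a: type S1 with at least three leaves. -/
def typeXa (G : SimpleGraph V) (u : V) : Prop :=
  typeS1 G u ∧ 3 ≤ lam1 G u

/-- Type X_b: type S2 with exactly one branch having at most two 2-leaves. -/
def typeXb (G : SimpleGraph V) (u : V) : Prop :=
  typeS2 G u ∧ (smallBranches G u).ncard = 1

/-- Type Y_C: type S2 with at least two branches having at most two 2-leaves. -/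
def typeYc (G : SimpleGraph V) (u : V) : Prop :=
  typeS2 G u ∧ 2 ≤ (smallBranches G u).ncard

/-- Type G: type S1 with exactly two leaves, having at least one neighbouring
spine-subtree of type S1. -/
def typeG' (G : SimpleGraph V) {k : ℕ} (s : SpineEnum G k) (i : ℕ) : Prop :=
  typeS1 G (s.v i) ∧ lam1 G (s.v i) = 2 ∧
    ((0 < i ∧ typeS1 G (s.v (i - 1))) ∨ (i < k ∧ typeS1 G (s.v (i + 1))))

/-- Type X_c: type S1 with exactly two leaves, both neighbouring spine-subtrees
existing and being of type S2. -/
def typeXc (G : SimpleGraph V) {k : ℕ} (s : SpineEnum G k) (i : ℕ) : Prop :=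
  typeS1 G (s.v i) ∧ lam1 G (s.v i) = 2 ∧
    0 < i ∧ i < k ∧ typeS2 G (s.v (i - 1)) ∧ typeS2 G (s.v (i + 1))

/-- Type X: type X_a, X_b or X_c. -/
def typeX (G : SimpleGraph V) {k : ℕ} (s : SpineEnum G k) (i : ℕ) : Prop :=
  typeXa G (s.v i) ∨ typeXb G (s.v i) ∨ typeXc G s i

/-- Type F_A, G or X_a. -/
def FGXa (G : SimpleGraph V) {k : ℕ} (s : SpineEnum G k) (i : ℕ) : Prop :=
  typeFA G (s.v i) ∨ typeG' G s i ∨ typeXa G (s.v i)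

/-- The sequence of spine-subtrees `S i, S (i+1), …, S (i + 2*j)` is of type T_4. -/
def isT4 (G : SimpleGraph V) {k : ℕ} (s : SpineEnum G k) (i j : ℕ) : Prop :=
  i + 2 * j ≤ k ∧
  (∀ m ≤ j, typeFA G (s.v (i + 2 * m))) ∧
  (∀ m < j, typeX G s (i + 2 * m + 1) ∨ typeFA G (s.v (i + 2 * m + 1))) ∧
  (¬ (2 ≤ i ∧ typeFA G (s.v (i - 2)) ∧
      (typeX G s (i - 1) ∨ typeFA G (s.v (i - 1))))) ∧
  (¬ (i + 2 * j + 2 ≤ k ∧ typeFA G (s.v (i + 2 * j + 2)) ∧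
      (typeX G s (i + 2 * j + 1) ∨ typeFA G (s.v (i + 2 * j + 1))))) ∧
  (1 ≤ i → FGXa G s (i - 1)) ∧
  (2 ≤ i → ¬ typeXc G s (i - 2)) ∧
  (i + 2 * j + 1 ≤ k → FGXa G s (i + 2 * j + 1)) ∧
  (i + 2 * j + 2 ≤ k → ¬ typeXc G s (i + 2 * j + 2))

/-- The spine-subtree `S i` belongs to some sequence of type T_4. -/
def inT4 (G : SimpleGraph V) {k : ℕ} (s : SpineEnum G k) (i : ℕ) : Prop :=
  ∃ a j, isT4 G s a j ∧ a ≤ i ∧ i ≤ a + 2 * j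

/-- The spine-subtree `S i` appears as an F_A-spine-subtree (even offset)
in some sequence of type T_4. -/
def inT4asFA (G : SimpleGraph V) {k : ℕ} (s : SpineEnum G k) (i : ℕ) : Prop :=
  ∃ a j, isT4 G s a j ∧ ∃ m ≤ j, i = a + 2 * m

/-- The 1-leaves of the lobster `G`: leaves adjacent to a spine vertex. -/
def oneLeavesL (G : SimpleGraph V) : Set V :=
  {x | G.IsLeafVert x ∧ ∃ u ∈ spineSet G, G.Adj u x}

/-- The 2-leaves of the lobster `G`: leaves not adjacent to any spine vertex
(i.e. at distance 2 from their nearest spine vertex). -/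
def twoLeavesL (G : SimpleGraph V) : Set V :=
  {x | G.IsLeafVert x ∧ ¬ ∃ u ∈ spineSet G, G.Adj u x}

/-- `λ1(L)`: the number of 1-leaves of `G`. -/
def lam1L (G : SimpleGraph V) : ℕ := (oneLeavesL G).ncard

/-- `λ2(L)`: the number of 2-leaves of `G`. -/
def lam2L (G : SimpleGraph V) : ℕ := (twoLeavesL G).ncard

/-- `λ2*(L)`: the number of 2-only-leaves of `G`. -/
def lam2starL (G : SimpleGraph V) : ℕ :=
  {x | x ∈ twoLeavesL G ∧ IsOnlyLeaf G x}.ncard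

/-- `ν2(L)`: the number of branches having at most two 2-leaves that belong
to spine-subtrees of type S2. -/
def nu2 (G : SimpleGraph V) {k : ℕ} (s : SpineEnum G k) : ℕ :=
  ∑ i ∈ Finset.range (k + 1),
    if typeS2 G (s.v i) then (smallBranches G (s.v i)).ncard else 0

/-- `ν3(L)`: the number of spine-subtrees of type X_c. -/
def nu3 (G : SimpleGraph V) {k : ℕ} (s : SpineEnum G k) : ℕ :=
  ((Finset.range (k + 1)).filter (fun i => typeXc G s i)).card

/-- `ν4(L)`: the sum over all sequences of type T_4 of
`(j + 1) - #(spine-subtrees of type X_b or X_c in the sequence)`. -/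
def nu4 (G : SimpleGraph V) {k : ℕ} (s : SpineEnum G k) : ℕ :=
  ∑ i ∈ Finset.range (k + 1), ∑ j ∈ Finset.range (k + 1),
    if isT4 G s i j then
      (j + 1) - ((Finset.range (2 * j + 1)).filter
        (fun m => typeXb G (s.v (i + m)) ∨ typeXc G s (i + m))).card
    else 0

/-- `β*(L) = ν1(L) + ν2(L) + ν3(L) + ν4(L)` where
`ν1(L) = λ1(L) + λ2(L) + λ2*(L)`. -/
def betaStar (G : SimpleGraph V) {k : ℕ} (s : SpineEnum G k) : ℕ :=
  (lam1L G + lam2L G + lam2starL G) + nu2 G s + nu3 G s + nu4 G s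

/-- every optimal independent broadcast on a connected graph of
order at least 2 is a dominating broadcast. -/
theorem stmt2 {V : Type*} [Fintype V] (G : SimpleGraph V) (hconn : G.Connected)
    (hcard : 2 ≤ Fintype.card V) (f : V → ℕ)
    (hf : IsIndepBroadcast G f) (hopt : bcost f = betaB G) :
    IsDominatingBroadcast G f := by
  intro w
  by_contra hcon
  push_neg at hcon
  -- hcon : ∀ u, 0 < f u → f u < G.dist u w
  have hfw : f w = 0 := by
    by_contra hw
    have := hcon w (Nat.pos_of_ne_zero hw)
    simp [SimpleGraph.dist_self] at this
  set f' := Function.update f w 1 with hf'def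
  have hecc : 1 ≤ ecc G w := by
    obtain ⟨u, hu⟩ := Fintype.exists_ne_of_one_lt_card (by omega) w
    have hd : 0 < G.dist w u := hconn.pos_dist_of_ne (Ne.symm hu)
    exact le_trans hd (Finset.le_sup (Finset.mem_univ u))
  have hb' : IsIndepBroadcast G f' := by
    constructor
    · intro v
      by_cases hv : v = w
      · subst hv; simpa [hf'def] using hecc
      · simpa [hf'def, Function.update_of_ne hv] using hf.1 v
    · intro u v huv hu hv
      by_cases hu' : u = w
      · subst hu'
        simp only [hf'def, Function.update_of_ne (Ne.symm huv)] at hv ⊢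
        simp only [hf'def, Function.update_self] at hu ⊢
        have h1 := hcon v hv
        rw [SimpleGraph.dist_comm] at h1
        have h2 : max 1 (f v) = f v := max_eq_right hv
        omega
      · by_cases hv' : v = w
        · subst hv'
          simp only [hf'def, Function.update_of_ne hu'] at hu ⊢
          simp only [hf'def, Function.update_self] at hv ⊢
          have h1 := hcon u hu
          have h2 : max (f u) 1 = f u := max_eq_left hu
          omega
        · simp only [hf'def, Function.update_of_ne hu'] at hu ⊢
          simp only [hf'def, Function.update_of_ne hv'] at hv ⊢
          exact hf.2 u v huv hu hv
  have hcost : bcost f' = bcost f + 1 := by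
    unfold bcost
    rw [hf'def, Finset.sum_update_of_mem (Finset.mem_univ w)]
    have h2 : ∑ v, f v = f w + ∑ v ∈ Finset.univ \ {w}, f v := by
      rw [Finset.sdiff_singleton_eq_erase, Finset.add_sum_erase _ f (Finset.mem_univ w)]
    omega
  have hbdd : BddAbove {c : ℕ | ∃ g : V → ℕ, IsIndepBroadcast G g ∧ bcost g = c} := by
    refine ⟨∑ v, ecc G v, ?_⟩
    rintro c ⟨g, hg, rfl⟩
    exact Finset.sum_le_sum fun v _ => hg.1 v
  have hle : bcost f' ≤ betaB G := le_csSup hbdd ⟨f', hb', rfl⟩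
  omega
end
end

section
/- Let G be a finite connected simple graph with at least 3 vertices, and let v be a vertex of G having a pendent neighbour u (i.e., u has degree 1 and is adjacent to v). If f is an independent broadcast on G with f(v) > 0, then there exists an independent broadcast f' on G with cost(f') > cost(f). In particular, every optimal independent broadcast on G assigns value 0 to every vertex having a pendent neighbour. -/
noncomputable section

open scoped Classical

variable {V : Type*}

section Stmt4Aux

open SimpleGraph

private lemma leaf_nbr_eq {V : Type*} (G : SimpleGraph V) {u v : V}
    (hadj : G.Adj v u) (hleaf : G.IsLeafVert u) : G.neighborSet u = {v} := by
  obtain ⟨a, ha⟩ := Set.ncard_eq_one.mp hleaf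
  have hv : v ∈ G.neighborSet u := hadj.symm
  rw [ha] at hv ⊢
  simp_all

private lemma leaf_dist {V : Type*} (G : SimpleGraph V) (hconn : G.Connected)
    {u v : V} (hadj : G.Adj v u) (hleaf : G.IsLeafVert u) {x : V} (hx : x ≠ u) :
    G.dist u x = G.dist v x + 1 := by
  have hdu : G.dist u v = 1 := SimpleGraph.dist_eq_one_iff_adj.mpr hadj.symm
  have h1 : G.dist u x ≤ 1 + G.dist v x := by
    calc G.dist u x ≤ G.dist u v + G.dist v x := hconn.dist_triangle
    _ = 1 + G.dist v x := by rw [hdu]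
  have h2 : G.dist v x + 1 ≤ G.dist u x := by
    obtain ⟨p, hp⟩ := (hconn u x).exists_walk_length_eq_dist
    cases p with
    | nil => exact absurd rfl hx.symm
    | cons h q =>
      rename_i w
      have hw : w ∈ G.neighborSet u := h
      rw [leaf_nbr_eq G hadj hleaf] at hw
      subst hw
      have := G.dist_le q
      simp [SimpleGraph.Walk.length_cons] at hp
      omega
  omega

private lemma dist_le_ecc {V : Type*} [Fintype V] (G : SimpleGraph V) (u x : V) :
    G.dist u x ≤ ecc G u := by
  unfold ecc
  exact Finset.le_sup (Finset.mem_univ x)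

end Stmt4Aux

/-- if `v` has a pendent neighbour `u` in a connected graph `G` of
order at least 3, then no independent broadcast with `f v > 0` is optimal:
its cost can be strictly increased, and every optimal independent broadcast
gives value 0 to `v`. -/
theorem stmt4 {V : Type*} [Fintype V] (G : SimpleGraph V) (hconn : G.Connected)
    (hcard : 3 ≤ Fintype.card V) (u v : V) (hadj : G.Adj v u)
    (hleaf : G.IsLeafVert u) :
    (∀ f : V → ℕ, IsIndepBroadcast G f → 0 < f v →
      ∃ f' : V → ℕ, IsIndepBroadcast G f' ∧ bcost f < bcost f') ∧
    (∀ g : V → ℕ, IsIndepBroadcast G g → bcost g = betaB G → g v = 0) := by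
  classical
  have hne : u ≠ v := (G.ne_of_adj hadj).symm
  have hdist_uv : G.dist u v = 1 := SimpleGraph.dist_eq_one_iff_adj.mpr hadj.symm
  -- eccentricity inequality
  have hecc : ecc G v + 1 ≤ ecc G u := by
    obtain ⟨w, hwu, hwv⟩ : ∃ w : V, w ≠ u ∧ w ≠ v := by
      by_contra h
      push_neg at h
      have hsub : (Finset.univ : Finset V) ⊆ {u, v} := by
        intro w _
        rcases eq_or_ne w u with rfl | hwu
        · simp
        · simp [h w hwu]
      have := Finset.card_le_card hsub
      have h2 : ({u, v} : Finset V).card ≤ 2 := Finset.card_insert_le _ _ |>.trans (by simp)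
      simp [Finset.card_univ] at this
      omega
    have hu2 : 2 ≤ ecc G u := by
      have hdw : G.dist u w = G.dist v w + 1 := leaf_dist G hconn hadj hleaf hwu
      have hpos : 0 < G.dist v w := hconn.pos_dist_of_ne (Ne.symm hwv)
      have := dist_le_ecc G u w
      omega
    have : ∀ x : V, G.dist v x + 1 ≤ ecc G u := by
      intro x
      rcases eq_or_ne x u with rfl | hxu
      · rw [G.dist_comm]; omega
      · have hdx : G.dist u x = G.dist v x + 1 := leaf_dist G hconn hadj hleaf hxu
        have := dist_le_ecc G u x
        omega
    have : ecc G v ≤ ecc G u - 1 := Finset.sup_le fun x _ => by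
      have := this x; omega
    omega
  have main : ∀ f : V → ℕ, IsIndepBroadcast G f → 0 < f v →
      ∃ f' : V → ℕ, IsIndepBroadcast G f' ∧ bcost f < bcost f' := by
    intro f hf hfv
    have hfu : f u = 0 := by
      by_contra h
      have hu : 0 < f u := Nat.pos_of_ne_zero h
      have := hf.2 u v hne hu hfv
      omega
    refine ⟨Function.update (Function.update f v 0) u (f v + 1), ⟨?_, ?_⟩, ?_⟩
    · intro x
      rcases eq_or_ne x u with rfl | hxu
      · rw [Function.update_self]
        have := hf.1 v
        omega
      · rw [Function.update_of_ne hxu]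
        rcases eq_or_ne x v with rfl | hxv
        · simp
        · rw [Function.update_of_ne hxv]; exact hf.1 x
    · intro a b hab ha hb
      -- helper to evaluate f'
      have heval : ∀ x : V, x ≠ u → x ≠ v →
          Function.update (Function.update f v 0) u (f v + 1) x = f x := by
        intro x h1 h2
        rw [Function.update_of_ne h1, Function.update_of_ne h2]
      have hvz : Function.update (Function.update f v 0) u (f v + 1) v = 0 := by
        rw [Function.update_of_ne (Ne.symm hne), Function.update_self]
      have key : ∀ b : V, b ≠ u →
          0 < Function.update (Function.update f v 0) u (f v + 1) b →
          max (f v + 1) (Function.update (Function.update f v 0) u (f v + 1) b)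
            < G.dist u b := by
        intro b hbu hb
        have hbv : b ≠ v := by
          rintro rfl
          rw [hvz] at hb
          omega
        rw [heval b hbu hbv] at hb ⊢
        have hd := hf.2 v b (Ne.symm hbv) hfv hb
        have hdb : G.dist u b = G.dist v b + 1 :=
          leaf_dist G hconn hadj hleaf hbu
        omega
      rcases eq_or_ne a u with rfl | hau
      · rw [Function.update_self] at ha ⊢
        exact key b (Ne.symm hab) hb
      · rcases eq_or_ne b u with rfl | hbu
        · rw [Function.update_self] at hb ⊢
          rw [G.dist_comm, max_comm]
          exact key a hab ha
        · have hav : a ≠ v := by rintro rfl; rw [hvz] at ha; omega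
          have hbv : b ≠ v := by rintro rfl; rw [hvz] at hb; omega
          rw [heval a hau hav] at ha ⊢
          rw [heval b hbu hbv] at hb ⊢
          exact hf.2 a b hab ha hb
    · have h1 : bcost (Function.update (Function.update f v 0) u (f v + 1))
          = (f v + 1) + ∑ x ∈ Finset.univ \ {u}, Function.update f v 0 x := by
        unfold bcost
        rw [Finset.sum_update_of_mem (Finset.mem_univ u)]
      have h2 : ∑ x ∈ Finset.univ \ {u}, Function.update f v 0 x
          = 0 + ∑ x ∈ (Finset.univ \ {u}) \ {v}, f x := by
        rw [Finset.sum_update_of_mem (by simp [Ne.symm hne])]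
      have h3 : bcost f = f u + ∑ x ∈ Finset.univ \ {u}, f x := by
        unfold bcost
        rw [← Finset.sum_update_of_mem (Finset.mem_univ u), Function.update_eq_self]
      have h4 : ∑ x ∈ Finset.univ \ {u}, f x
          = f v + ∑ x ∈ (Finset.univ \ {u}) \ {v}, f x := by
        rw [← Finset.sum_update_of_mem (s := Finset.univ \ {u}) (by simp [Ne.symm hne]),
          Function.update_eq_self]
      omega
  refine ⟨main, ?_⟩
  intro g hg hopt
  by_contra h
  have hgv : 0 < g v := Nat.pos_of_ne_zero h
  obtain ⟨g', hg', hlt⟩ := main g hg hgv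
  have hbdd : BddAbove {c : ℕ | ∃ f : V → ℕ, IsIndepBroadcast G f ∧ bcost f = c} := by
    refine ⟨∑ x : V, ecc G x, ?_⟩
    rintro c ⟨f, hf, rfl⟩
    exact Finset.sum_le_sum fun x _ => hf.1 x
  have : bcost g' ≤ betaB G := le_csSup hbdd ⟨g', hg', rfl⟩
  rw [← hopt] at this
  omega
end
end

section
/- For every locally uniform 2-lobster L of length k ≥ 1, β_b(L) ≥ 2(k − 1) + 12 = 2(diam(L) − 1) + 4. -/
noncomputable section

open scoped Classical

variable {V : Type*}

/-!
Both end spine-subtrees `S_0` and `S_k` are of type S2: an end of type S1 would have the spine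
as its only non-leaf neighbour, i.e. it would be a leaf of the pruned caterpillar. So each end
has two branches, and picking a depth-2 vertex in each gives two vertices at distance 4; every
inner spine-subtree contributes a branch root at depth 1. Distances between different
spine-subtrees are realised through the spine, so broadcasting `3` from the four end vertices
and `2` from the `k - 1` inner branch roots is independent, of cost `12 + 2 (k - 1)`. Two
opposite end vertices are at distance `k + 4`, and no distance is larger because every vertex
lies within `2` of the spine.
-/

namespace SimpleGraph

variable {W : Type*} {H : SimpleGraph W}

lemma IsLeafVert.exists_adj {x : W} (hx : H.IsLeafVert x) : ∃ y, H.Adj x y := by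
  obtain ⟨y, hy⟩ := Set.ncard_eq_one.mp hx
  exact ⟨y, show y ∈ H.neighborSet x by rw [hy]; rfl⟩

lemma IsLeafVert.eq_of_adj {x a b : W} (hx : H.IsLeafVert x) (ha : H.Adj x a)
    (hb : H.Adj x b) : a = b := by
  obtain ⟨y, hy⟩ := Set.ncard_eq_one.mp hx
  have ha' : a ∈ H.neighborSet x := ha
  have hb' : b ∈ H.neighborSet x := hb
  rw [hy] at ha' hb'
  exact ha'.trans hb'.symm

lemma exists_adj_ne_of_not_isLeafVert {x u : W} (hx : ¬ H.IsLeafVert x) (hu : H.Adj x u) :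
    ∃ y, H.Adj x y ∧ y ≠ u := by
  by_contra! h
  exact hx <| Set.ncard_eq_one.mpr ⟨u, Set.eq_singleton_iff_unique_mem.mpr ⟨hu, h⟩⟩

lemma Connected.eq_or_eq_of_isLeafVert (hH : H.Connected) {x y : W} (hxy : H.Adj x y)
    (hx : H.IsLeafVert x) (hy : H.IsLeafVert y) (z : W) : z = x ∨ z = y := by
  have closed : ∀ {a b : W} (p : H.Walk a b), (a = x ∨ a = y) → (b = x ∨ b = y) := by
    intro a b p
    induction p with
    | nil => exact id
    | cons hab _ ih =>
      rintro (rfl | rfl)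
      · exact ih (Or.inr (hx.eq_of_adj hab hxy))
      · exact ih (Or.inl (hy.eq_of_adj hab hxy.symm))
  obtain ⟨p⟩ := hH x z
  exact closed p (Or.inl rfl)

lemma Walk.IsPath.append_of_support_inter {u v w : W} {p : H.Walk u v} {q : H.Walk v w}
    (hp : p.IsPath) (hq : q.IsPath) (h : ∀ x ∈ p.support, x ∈ q.support → x = v) :
    (p.append q).IsPath := by
  have hq' := hq.support_nodup
  rw [← q.cons_tail_support, List.nodup_cons] at hq'
  rw [Walk.isPath_def, Walk.support_append, List.nodup_append]
  refine ⟨hp.support_nodup, hq'.2, ?_⟩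
  rintro x hxp _ hxq rfl
  exact hq'.1 (h x hxp (List.mem_of_mem_tail hxq) ▸ hxq)

lemma IsAcyclic.eq_of_isPath (hH : H.IsAcyclic) {u v : W} {p q : H.Walk u v}
    (hp : p.IsPath) (hq : q.IsPath) : p = q :=
  congrArg Subtype.val ((hH.subsingleton_path u v).elim ⟨p, hp⟩ ⟨q, hq⟩)

lemma IsAcyclic.dist_eq_length (hH : H.IsAcyclic) {u v : W} {p : H.Walk u v}
    (hp : p.IsPath) : H.dist u v = p.length := by
  obtain ⟨q, hq, hlen⟩ := p.reachable.exists_path_of_dist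
  rw [← hlen, hH.eq_of_isPath hp hq]

lemma Reachable.exists_isPath_of_le {H' : SimpleGraph W} (hle : H' ≤ H) {u x : W}
    (hux : H'.Reachable u x) :
    ∃ q : H.Walk u x, q.IsPath ∧ ∀ y ∈ q.support, H'.Reachable u y := by
  obtain ⟨p⟩ := hux
  refine ⟨p.bypass.mapLe hle, (Walk.isPath_mapLe hle).mpr p.bypass_isPath, fun y hy => ?_⟩
  rw [Walk.support_mapLe_eq_support] at hy
  exact ⟨p.bypass.takeUntil y hy⟩

end SimpleGraph

open SimpleGraph

section Spine

variable {G : SimpleGraph V} {k : ℕ}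

lemma offSpine_adj_iff {a b : V} :
    (offSpine G).Adj a b ↔ G.Adj a b ∧ ¬ (a ∈ spineSet G ∧ b ∈ spineSet G) := by
  simp [offSpine]

lemma offSpine_le : offSpine G ≤ G := deleteEdges_le _

lemma mem_Ssub_of_adj {u w x : V} (hw : w ∈ Ssub G u) (hwx : G.Adj w x)
    (hspine : ¬ (w ∈ spineSet G ∧ x ∈ spineSet G)) : x ∈ Ssub G u :=
  Reachable.trans hw (offSpine_adj_iff.mpr ⟨hwx, hspine⟩).reachable

namespace SpineEnum

variable (s : SpineEnum G k)

lemma v_mem_spineSet {i : ℕ} (hi : i ≤ k) : s.v i ∈ spineSet G := (s.mem _).2 ⟨i, hi, rfl⟩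

lemma adj_succ {i : ℕ} (hi : i + 1 ≤ k) : G.Adj (s.v i) (s.v (i + 1)) :=
  (s.adj i (by omega) (i + 1) hi).2 (Or.inl rfl)

def walk (i : ℕ) : (n : ℕ) → i + n ≤ k → G.Walk (s.v i) (s.v (i + n))
  | 0, _ => Walk.nil
  | n + 1, h => (walk i n (by omega)).concat (s.adj_succ h)

lemma length_walk (i : ℕ) : ∀ n (h : i + n ≤ k), (s.walk i n h).length = n
  | 0, _ => rfl
  | n + 1, h => by simp [walk, length_walk i n]

lemma exists_eq_of_mem_support_walk (i : ℕ) :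
    ∀ n (h : i + n ≤ k), ∀ x ∈ (s.walk i n h).support, ∃ m ≤ n, s.v (i + m) = x
  | 0, _, x, hx => ⟨0, le_rfl, by simp_all [walk]⟩
  | n + 1, h, x, hx => by
    rw [walk, Walk.support_concat, List.mem_append, List.mem_singleton] at hx
    rcases hx with hx | rfl
    · obtain ⟨m, hm, rfl⟩ := exists_eq_of_mem_support_walk i n (by omega) x hx
      exact ⟨m, by omega, rfl⟩
    · exact ⟨n + 1, le_rfl, rfl⟩

lemma support_walk_subset (i n : ℕ) (h : i + n ≤ k) :
    ∀ x ∈ (s.walk i n h).support, x ∈ spineSet G := by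
  intro x hx
  obtain ⟨m, hm, rfl⟩ := s.exists_eq_of_mem_support_walk i n h x hx
  exact s.v_mem_spineSet (by omega)

lemma isPath_walk (i : ℕ) : ∀ n (h : i + n ≤ k), (s.walk i n h).IsPath
  | 0, _ => Walk.IsPath.nil
  | n + 1, h => by
    refine (Walk.concat_isPath_iff _).mpr ⟨isPath_walk i n (by omega), fun hx => ?_⟩
    obtain ⟨m, hm, hmn⟩ := s.exists_eq_of_mem_support_walk i n (by omega) _ hx
    have := s.inj _ (by omega) _ h hmn
    omega

/-- An off-spine path between two spine vertices would be the spine path itself, whose first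
edge is a spine edge. -/
lemma eq_of_v_mem_Ssub (ht : G.IsTree) {i j : ℕ} (hi : i ≤ k) (hj : j ≤ k)
    (h : s.v j ∈ Ssub G (s.v i)) : i = j := by
  by_contra hne
  wlog hij : i < j generalizing i j
  · exact this hj hi (Reachable.symm h) (Ne.symm hne) (by omega)
  obtain ⟨n, rfl⟩ := Nat.exists_eq_add_of_lt hij
  obtain ⟨p⟩ := h
  have hq : p.bypass.mapLe offSpine_le = s.walk i (n + 1) hj :=
    ht.isAcyclic.eq_of_isPath ((Walk.isPath_mapLe _).mpr p.bypass_isPath) (s.isPath_walk _ _ _)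
  have hsupp : ∀ x ∈ p.bypass.support, x ∈ spineSet G := by
    rw [← Walk.support_mapLe_eq_support offSpine_le, hq]
    exact s.support_walk_subset _ _ _
  have hnil : ¬ p.bypass.Nil :=
    Walk.not_nil_of_ne fun h => by have := s.inj _ hi _ hj h; omega
  exact (offSpine_adj_iff.mp (p.bypass.adj_snd hnil)).2
    ⟨s.v_mem_spineSet hi, hsupp _ (p.bypass.getVert_mem_support 1)⟩

lemma eq_of_mem_Ssub_of_mem_spineSet (ht : G.IsTree) {i : ℕ} (hi : i ≤ k) {x : V}
    (hx : x ∈ Ssub G (s.v i)) (hxs : x ∈ spineSet G) : x = s.v i := by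
  obtain ⟨j, hj, rfl⟩ := (s.mem x).1 hxs
  rw [s.eq_of_v_mem_Ssub ht hi hj hx]

lemma eq_of_mem_Ssub_of_mem_Ssub (ht : G.IsTree) {i j : ℕ} (hi : i ≤ k) (hj : j ≤ k)
    {x : V} (hxi : x ∈ Ssub G (s.v i)) (hxj : x ∈ Ssub G (s.v j)) : i = j :=
  s.eq_of_v_mem_Ssub ht hi hj (Reachable.trans hxi (Reachable.symm hxj))

/-- The off-spine paths `x ⟶ v i` and `v j ⟶ y` meet the spine path `v i ⟶ v j` only at its ends,
so together they form the path from `x` to `y`. -/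
lemma dist_eq_of_mem_Ssub (ht : G.IsTree) {i j : ℕ} (hij : i < j) (hj : j ≤ k) {x y : V}
    (hx : x ∈ Ssub G (s.v i)) (hy : y ∈ Ssub G (s.v j)) :
    G.dist x y = G.dist (s.v i) x + (j - i) + G.dist (s.v j) y := by
  obtain ⟨n, rfl⟩ := Nat.exists_eq_add_of_lt hij
  have hi : i ≤ k := by omega
  obtain ⟨p, hp, hpS⟩ := Reachable.exists_isPath_of_le offSpine_le hx
  obtain ⟨q, hq, hqS⟩ := Reachable.exists_isPath_of_le offSpine_le hy
  set M := s.walk i (n + 1) hj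
  have hMq : (M.append q).IsPath :=
    (s.isPath_walk _ _ _).append_of_support_inter hq fun z hzM hzq =>
      s.eq_of_mem_Ssub_of_mem_spineSet ht hj (hqS z hzq) (s.support_walk_subset _ _ _ z hzM)
  have hall : (p.reverse.append (M.append q)).IsPath := by
    refine hp.reverse.append_of_support_inter hMq fun z hzp hz => ?_
    rw [Walk.support_reverse, List.mem_reverse] at hzp
    rw [Walk.support_append, List.mem_append] at hz
    rcases hz with hzM | hzq
    · exact s.eq_of_mem_Ssub_of_mem_spineSet ht hi (hpS z hzp)
        (s.support_walk_subset _ _ _ z hzM)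
    · have := s.eq_of_mem_Ssub_of_mem_Ssub ht hi hj (hpS z hzp) (hqS z (List.mem_of_mem_tail hzq))
      omega
  rw [ht.isAcyclic.dist_eq_length hall, ht.isAcyclic.dist_eq_length hp,
    ht.isAcyclic.dist_eq_length hq]
  simp only [Walk.length_append, Walk.length_reverse, s.length_walk, M]
  omega

end SpineEnum

end Spine

section Lobster

variable {G : SimpleGraph V} {k : ℕ}

lemma pruned_adj {a b : nonleaves G} : (pruned G).Adj a b ↔ G.Adj a b := Iff.rfl

lemma isLeafVert_pruned {x : V} (hx : ¬ G.IsLeafVert x) (hxs : x ∉ spineSet G) :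
    (pruned G).IsLeafVert ⟨x, hx⟩ := by
  by_contra h
  exact hxs ⟨hx, h⟩

lemma adj_and_not_mem_spineSet_of_mem_branchRoots {u w : V} (hu : u ∈ spineSet G)
    (hw : w ∈ branchRoots G u) : G.Adj u w ∧ w ∉ spineSet G := by
  have h := offSpine_adj_iff.mp hw
  exact ⟨h.1, fun hws => h.2 ⟨hu, hws⟩⟩

lemma exists_mem_Ssub_dist_eq_one {u : V} (h : (branchRoots G u).Nonempty) :
    ∃ w ∈ Ssub G u, G.dist u w = 1 := by
  obtain ⟨w, hw⟩ := h
  exact ⟨w, Adj.reachable hw, dist_eq_one_iff_adj.mpr (offSpine_adj_iff.mp hw).1⟩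

/-- A non-spine vertex `w` that is not a leaf is a leaf of `pruned G`, so all its neighbours
except the spine vertex `u` are leaves of `G`. -/
lemma exists_isLeafVert_adj {u w : V} (hu : u ∈ spineSet G) (huw : G.Adj u w)
    (hw : ¬ G.IsLeafVert w) (hws : w ∉ spineSet G) : ∃ x, G.Adj w x ∧ G.IsLeafVert x := by
  obtain ⟨x, hwx, hxu⟩ := exists_adj_ne_of_not_isLeafVert hw huw.symm
  refine ⟨x, hwx, ?_⟩
  by_contra hx
  have := (isLeafVert_pruned hw hws).eq_of_adj (a := ⟨u, hu.1⟩) (b := ⟨x, hx⟩) (pruned_adj.mpr huw.symm)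
    (pruned_adj.mpr hwx)
  exact hxu (congrArg Subtype.val this).symm

lemma mem_spineSet_of_adj_of_typeS1 (ht : G.IsTree) {u w : V} (hu : u ∈ spineSet G)
    (hS1 : typeS1 G u) (huw : G.Adj u w) (hw : ¬ G.IsLeafVert w) : w ∈ spineSet G := by
  by_contra hws
  obtain ⟨x, hwx, hx⟩ := exists_isLeafVert_adj hu huw hw hws
  have hwS : w ∈ Ssub G u := mem_Ssub_of_adj (Reachable.refl u) huw fun h => hws h.2
  have hxS : x ∈ Ssub G u := mem_Ssub_of_adj hwS hwx fun h => hws h.1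
  exact ht.dist_ne_of_adj u hwx <| by rw [dist_eq_one_iff_adj.mpr huw, hS1 x hxS hx]

lemma exists_spine_adj_ne_of_typeS1 (ht : G.IsTree) {u w : V} (hu : u ∈ spineSet G)
    (hS1 : typeS1 G u) (hw : w ∈ spineSet G) (huw : G.Adj u w) :
    ∃ z ∈ spineSet G, G.Adj u z ∧ z ≠ w := by
  obtain ⟨⟨z, hz⟩, huz, hzw⟩ :=
    exists_adj_ne_of_not_isLeafVert (H := pruned G) (u := ⟨w, hw.1⟩) hu.2 huw
  exact ⟨z, mem_spineSet_of_adj_of_typeS1 ht hu hS1 huz hz, huz, fun h => hzw (Subtype.ext h)⟩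

lemma SpineEnum.typeS2_of_end (s : SpineEnum G k) (ht : G.IsTree) (hlu : LocallyUniform G s)
    (hk : 1 ≤ k) {i : ℕ} (hi : i = 0 ∨ i = k) : typeS2 G (s.v i) := by
  refine (hlu i (by omega)).resolve_left fun hS1 => ?_
  obtain ⟨j, hj, hij⟩ : ∃ j ≤ k, i + 1 = j ∨ j + 1 = i := by
    rcases hi with hi | hi
    · exact ⟨1, hk, by omega⟩
    · exact ⟨k - 1, by omega, by omega⟩
  replace hij := (s.adj i (by omega) j hj).2 hij
  obtain ⟨z, hz, hiz, hzj⟩ := exists_spine_adj_ne_of_typeS1 ht (s.v_mem_spineSet (by omega))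
    hS1 (s.v_mem_spineSet hj) hij
  obtain ⟨j', hj', rfl⟩ := (s.mem z).1 hz
  have := (s.adj i (by omega) j' hj').1 hiz
  have := (s.adj i (by omega) j hj).1 hij
  exact hzj (congrArg s.v (by omega))

lemma exists_adj_dist_eq_two_of_typeS2 (ht : G.IsTree) {u w : V} (hu : u ∈ spineSet G)
    (hS2 : typeS2 G u) (hw : w ∈ branchRoots G u) :
    ∃ x, G.Adj w x ∧ x ≠ u ∧ x ∈ Ssub G u ∧ G.dist u x = 2 := by
  obtain ⟨huw, hws⟩ := adj_and_not_mem_spineSet_of_mem_branchRoots hu hw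
  have hwS : w ∈ Ssub G u := Adj.reachable hw
  have hwl : ¬ G.IsLeafVert w := fun hwl => by
    have := hS2 w hwS hwl
    rw [dist_eq_one_iff_adj.mpr huw] at this
    omega
  obtain ⟨x, hwx, hxu⟩ := exists_adj_ne_of_not_isLeafVert hwl huw.symm
  refine ⟨x, hwx, hxu, mem_Ssub_of_adj hwS hwx fun h => hws h.1, ?_⟩
  have hx0 : G.dist u x ≠ 0 := fun h => hxu ((ht.connected u x).dist_eq_zero_iff.mp h).symm
  have := ht.dist_eq_dist_add_one_of_adj u hwx
  rw [dist_eq_one_iff_adj.mpr huw] at this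
  omega

/-- Two branches of an S2 spine-subtree give vertices `x₀ – w₀ – u – w₁ – x₁` on a path. -/
lemma exists_pair_dist_eq_four (ht : G.IsTree) {u : V} (hu : u ∈ spineSet G)
    (hS2 : typeS2 G u) (h2 : 2 ≤ (branchRoots G u).ncard) :
    ∃ x : Fin 2 → V, (∀ m, x m ∈ Ssub G u ∧ G.dist u (x m) = 2) ∧
      ∀ m m', m ≠ m' → G.dist (x m) (x m') = 4 := by
  obtain ⟨w₀, w₁, hw₀, hw₁, hw⟩ := (Set.one_lt_ncard_iff (Set.finite_of_ncard_pos (by omega))).1 h2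
  obtain ⟨x₀, hwx₀, hxu₀, hxS₀, hd₀⟩ := exists_adj_dist_eq_two_of_typeS2 ht hu hS2 hw₀
  obtain ⟨x₁, hwx₁, hxu₁, hxS₁, hd₁⟩ := exists_adj_dist_eq_two_of_typeS2 ht hu hS2 hw₁
  have huw₀ := (adj_and_not_mem_spineSet_of_mem_branchRoots hu hw₀).1
  have huw₁ := (adj_and_not_mem_spineSet_of_mem_branchRoots hu hw₁).1
  refine ⟨![x₀, x₁], fun m => by fin_cases m <;> simp [*], ?_⟩
  let p : G.Walk x₀ x₁ := .cons hwx₀.symm (.cons huw₀.symm (.cons huw₁ (.cons hwx₁ .nil)))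
  have hp : p.IsPath := by
    rw [ht.isAcyclic.isPath_iff_isChain]
    simp [p, hxu₀, hxu₁.symm, hw, hwx₀.ne.symm, huw₀.ne.symm, huw₁.ne]
  have h4 : G.dist x₀ x₁ = 4 := by simpa [p] using ht.isAcyclic.dist_eq_length hp
  intro m m' hm
  fin_cases m <;> fin_cases m' <;> simp_all [dist_comm]

end Lobster

section Diameter

variable {G : SimpleGraph V} {k : ℕ}

/-- Two adjacent leaves of the tree `pruned G` would make up all of it, leaving no room for a
spine vertex. -/
lemma exists_spine_adj_of_not_isLeafVert (hL : IsLobster G) {v : V} (hv : v ∈ spineSet G)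
    {x : V} (hx : ¬ G.IsLeafVert x) (hxs : x ∉ spineSet G) : ∃ z ∈ spineSet G, G.Adj x z := by
  have hxl := isLeafVert_pruned hx hxs
  obtain ⟨⟨z, hz⟩, hxz⟩ := hxl.exists_adj
  refine ⟨z, ?_, pruned_adj.mp hxz⟩
  by_contra hzs
  have hzl := isLeafVert_pruned hz hzs
  rcases hL.2.1.connected.eq_or_eq_of_isLeafVert hxz hxl hzl ⟨v, hv.1⟩ with h | h <;>
    exact hv.2 (h ▸ ‹_›)

lemma exists_spine_dist_le_two (hL : IsLobster G) {v : V} (hv : v ∈ spineSet G) (u : V) :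
    ∃ z ∈ spineSet G, G.dist u z ≤ 2 := by
  by_cases hus : u ∈ spineSet G
  · exact ⟨u, hus, by simp⟩
  by_cases hul : G.IsLeafVert u
  · obtain ⟨y, huy⟩ := hul.exists_adj
    have hyl : ¬ G.IsLeafVert y := fun hyl => by
      rcases hL.1.connected.eq_or_eq_of_isLeafVert huy hul hyl v with rfl | rfl <;>
        exact hv.1 ‹_›
    by_cases hys : y ∈ spineSet G
    · exact ⟨y, hys, (dist_le huy.toWalk).trans (by simp)⟩
    obtain ⟨z, hz, hyz⟩ := exists_spine_adj_of_not_isLeafVert hL hv hyl hys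
    exact ⟨z, hz, (dist_le (Walk.cons huy hyz.toWalk)).trans (by simp)⟩
  obtain ⟨z, hz, huz⟩ := exists_spine_adj_of_not_isLeafVert hL hv hul hus
  exact ⟨z, hz, (dist_le huz.toWalk).trans (by simp)⟩

lemma SpineEnum.dist_v_le (s : SpineEnum G k) (ht : G.IsTree) {i j : ℕ} (hi : i ≤ k)
    (hj : j ≤ k) : G.dist (s.v i) (s.v j) ≤ k := by
  rcases lt_trichotomy i j with h | rfl | h
  · rw [s.dist_eq_of_mem_Ssub ht h hj (Reachable.refl _) (Reachable.refl _)]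
    simp only [dist_self]
    omega
  · simp
  · rw [dist_comm, s.dist_eq_of_mem_Ssub ht h hi (Reachable.refl _) (Reachable.refl _)]
    simp only [dist_self]
    omega

lemma SpineEnum.dist_le_add_four (s : SpineEnum G k) (hL : IsLobster G) (u w : V) :
    G.dist u w ≤ k + 4 := by
  have hv := s.v_mem_spineSet (Nat.zero_le k)
  obtain ⟨z, hz, huz⟩ := exists_spine_dist_le_two hL hv u
  obtain ⟨z', hz', hwz'⟩ := exists_spine_dist_le_two hL hv w
  obtain ⟨i, hi, rfl⟩ := (s.mem z).1 hz
  obtain ⟨j, hj, rfl⟩ := (s.mem z').1 hz'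
  have hconn := hL.1.connected
  calc G.dist u w ≤ G.dist u (s.v i) + G.dist (s.v i) w := hconn.dist_triangle
    _ ≤ G.dist u (s.v i) + (G.dist (s.v i) (s.v j) + G.dist (s.v j) w) := by
        gcongr
        exact hconn.dist_triangle
    _ ≤ 2 + (k + 2) := by
        gcongr
        · exact s.dist_v_le hL.1 hi hj
        · rwa [dist_comm]
    _ = k + 4 := by omega

lemma dist_le_gdiam [Fintype V] (G : SimpleGraph V) (u w : V) : G.dist u w ≤ gdiam G :=
  (Finset.le_sup (f := fun w => G.dist u w) (Finset.mem_univ w)).trans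
    (Finset.le_sup (f := ecc G) (Finset.mem_univ u))

lemma gdiam_le [Fintype V] {n : ℕ} (h : ∀ u w, G.dist u w ≤ n) : gdiam G ≤ n :=
  Finset.sup_le fun u _ => Finset.sup_le fun w _ => h u w

end Diameter

section Broadcast

variable {G : SimpleGraph V} {k : ℕ}

/-- With at least two broadcast vertices, `f v < d(v, v') ≤ e(v)` for any other broadcast
vertex `v'`, so the eccentricity bound comes for free. -/
lemma le_betaB_of_pairwise [Fintype V] {ι : Type*} [Fintype ι] [Nontrivial ι] (p : ι → V)
    (c : ι → ℕ) (h : ∀ a b, a ≠ b → max (c a) (c b) < G.dist (p a) (p b)) :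
    ∑ a, c a ≤ betaB G := by
  have hp : Function.Injective p := fun a b hab => by
    by_contra hne
    have := h a b hne
    rw [hab, dist_self] at this
    omega
  set f : V → ℕ := Function.extend p c 0
  have hf : ∀ a, f (p a) = c a := hp.extend_apply c 0
  have hf0 : ∀ v, (¬ ∃ a, p a = v) → f v = 0 := fun v => Function.extend_apply' c (0 : V → ℕ) v
  have hind : IsIndepBroadcast G f := by
    refine ⟨fun v => ?_, fun u v huv hu hv => ?_⟩
    · by_cases hv : ∃ a, p a = v
      · obtain ⟨a, rfl⟩ := hv
        obtain ⟨b, hba⟩ := exists_ne a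
        rw [hf]
        exact ((le_max_left _ _).trans_lt (h a b hba.symm)).le.trans
          (Finset.le_sup (f := fun w => G.dist (p a) w) (Finset.mem_univ _))
      · simp [hf0 v hv]
    · obtain ⟨a, rfl⟩ := not_not.mp fun h' => hu.ne' (hf0 u h')
      obtain ⟨b, rfl⟩ := not_not.mp fun h' => hv.ne' (hf0 v h')
      rw [hf, hf]
      exact h a b fun hab => huv (hab ▸ rfl)
  have hcost : bcost f = ∑ a, c a :=
    (Fintype.sum_of_injective p hp c f (fun v hv => hf0 v (by simpa using hv))
      fun a => (hf a).symm).symm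
  have hbdd : BddAbove {c | ∃ f : V → ℕ, IsIndepBroadcast G f ∧ bcost f = c} :=
    ⟨∑ v, ecc G v, by rintro _ ⟨g, hg, rfl⟩; exact Finset.sum_le_sum fun v _ => hg.1 v⟩
  exact le_csSup hbdd ⟨f, hind, hcost⟩

lemma SpineEnum.max_lt_dist_of_placement (s : SpineEnum G k) (ht : G.IsTree) {ι : Type*}
    (p : ι → V) (pos d c : ι → ℕ) (hpos : ∀ a, pos a ≤ k)
    (hp : ∀ a, p a ∈ Ssub G (s.v (pos a)) ∧ G.dist (s.v (pos a)) (p a) = d a)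
    (hsame : ∀ a b, a ≠ b → pos a = pos b → max (c a) (c b) < G.dist (p a) (p b))
    (hfar : ∀ a b, pos a < pos b → max (c a) (c b) < d a + (pos b - pos a) + d b)
    (a b : ι) (hab : a ≠ b) : max (c a) (c b) < G.dist (p a) (p b) := by
  rcases lt_trichotomy (pos a) (pos b) with h | h | h
  · rw [s.dist_eq_of_mem_Ssub ht h (hpos b) (hp a).1 (hp b).1, (hp a).2, (hp b).2]
    exact hfar a b h
  · exact hsame a b hab h
  · rw [max_comm, dist_comm, s.dist_eq_of_mem_Ssub ht h (hpos a) (hp b).1 (hp a).1, (hp a).2,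
      (hp b).2]
    exact hfar b a h

lemma SpineEnum.le_betaB [Fintype V] (s : SpineEnum G k) (ht : G.IsTree)
    (hlu : LocallyUniform G s) (h2 : IsTwoLobster G s) (hk : 1 ≤ k) :
    2 * (k - 1) + 12 ≤ betaB G := by
  obtain ⟨x, hx, hx4⟩ := exists_pair_dist_eq_four ht (s.v_mem_spineSet (Nat.zero_le k))
    (s.typeS2_of_end ht hlu hk (Or.inl rfl)) (h2 0 (Nat.zero_le k))
  obtain ⟨y, hy, hy4⟩ := exists_pair_dist_eq_four ht (s.v_mem_spineSet le_rfl)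
    (s.typeS2_of_end ht hlu hk (Or.inr rfl)) (h2 k le_rfl)
  choose w hw using fun i : Fin (k - 1) => exists_mem_Ssub_dist_eq_one
    (Set.nonempty_of_ncard_ne_zero (by have := h2 (i + 1) (by omega); omega) :
      (branchRoots G (s.v (i + 1))).Nonempty)
  -- broadcast vertices: two at depth 2 in `S_0`, a branch root in each `S_(i+1)` with
  -- `i < k - 1`, and two at depth 2 in `S_k`
  let p : Fin 2 ⊕ Fin (k - 1) ⊕ Fin 2 → V := Sum.elim x (Sum.elim w y)
  let pos : Fin 2 ⊕ Fin (k - 1) ⊕ Fin 2 → ℕ :=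
    Sum.elim (fun _ => 0) (Sum.elim (fun i => i + 1) fun _ => k)
  let d : Fin 2 ⊕ Fin (k - 1) ⊕ Fin 2 → ℕ :=
    Sum.elim (fun _ => 2) (Sum.elim (fun _ => 1) fun _ => 2)
  let c : Fin 2 ⊕ Fin (k - 1) ⊕ Fin 2 → ℕ :=
    Sum.elim (fun _ => 3) (Sum.elim (fun _ => 2) fun _ => 3)
  have hc : ∑ a, c a = 2 * (k - 1) + 12 := by
    simp only [c, Fintype.sum_sum_type, Sum.elim_inl, Sum.elim_inr, Finset.sum_const,
      Finset.card_univ, Fintype.card_fin, smul_eq_mul]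
    omega
  rw [← hc]
  have := (Sum.inl_injective (α := Fin 2) (β := Fin (k - 1) ⊕ Fin 2)).nontrivial
  refine le_betaB_of_pairwise p c (s.max_lt_dist_of_placement ht p pos d c ?_ ?_ ?_ ?_)
  · rintro (m | i | m) <;> simp only [pos, Sum.elim_inl, Sum.elim_inr] <;> omega
  · rintro (m | i | m)
    · exact hx m
    · exact hw i
    · exact hy m
  · rintro (m | i | m) (m' | j | m') hab hpos <;>
      simp only [p, pos, c, Sum.elim_inl, Sum.elim_inr, ne_eq, Sum.inl.injEq, Sum.inr.injEq,
        reduceCtorEq, not_false_eq_true] at hab hpos ⊢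
    all_goals first
      | (rw [hx4 _ _ hab]; omega) | (rw [hy4 _ _ hab]; omega)
      | exact absurd (Fin.ext (by omega)) hab | (have := i.isLt; omega) | omega
  · rintro (m | i | m) (m' | j | m') h <;>
      simp only [pos, c, d, Sum.elim_inl, Sum.elim_inr] at h ⊢ <;> omega

end Broadcast

lemma SpineEnum.gdiam_eq [Fintype V] {G : SimpleGraph V} {k : ℕ} (s : SpineEnum G k)
    (hL : IsLobster G) (hlu : LocallyUniform G s) (h2 : IsTwoLobster G s) (hk : 1 ≤ k) :
    gdiam G = k + 4 := by
  obtain ⟨x, hx, -⟩ := exists_pair_dist_eq_four hL.1 (s.v_mem_spineSet (Nat.zero_le k))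
    (s.typeS2_of_end hL.1 hlu hk (Or.inl rfl)) (h2 0 (Nat.zero_le k))
  obtain ⟨y, hy, -⟩ := exists_pair_dist_eq_four hL.1 (s.v_mem_spineSet le_rfl)
    (s.typeS2_of_end hL.1 hlu hk (Or.inr rfl)) (h2 k le_rfl)
  refine le_antisymm (gdiam_le (s.dist_le_add_four hL)) ?_
  have := s.dist_eq_of_mem_Ssub hL.1 (by omega : 0 < k) le_rfl (hx 0).1 (hy 0).1
  rw [(hx 0).2, (hy 0).2] at this
  calc k + 4 = G.dist (x 0) (y 0) := by omega
    _ ≤ gdiam G := dist_le_gdiam G _ _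

/-- for every locally uniform 2-lobster `L` of length `k ≥ 1`,
`β_b(L) ≥ 2(k − 1) + 12 = 2(diam(L) − 1) + 4`. -/
theorem stmt10 {V : Type*} [Fintype V] (G : SimpleGraph V) (k : ℕ) (hk : 1 ≤ k)
    (hL : IsLobster G) (s : SpineEnum G k) (hlu : LocallyUniform G s)
    (h2 : IsTwoLobster G s) :
    2 * (k - 1) + 12 ≤ betaB G ∧ 2 * (k - 1) + 12 = 2 * (gdiam G - 1) + 4 := by
  refine ⟨s.le_betaB hL.1 hlu h2 hk, ?_⟩
  rw [s.gdiam_eq hL hlu h2 hk]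
  omega
end
end

section
/- If L is a locally uniform 2-lobster of length k = 0, then there exists an independent broadcast f on L with cost(f) = β*(L); in particular β_b(L) ≥ β*(L). -/
noncomputable section

open scoped Classical

variable {V : Type*}

set_option linter.dupNamespace false

namespace StmtAux
open SimpleGraph

/-- the unique neighbour of a leaf -/
noncomputable def nbr (G : SimpleGraph V) (x : V) : V :=
  if h : ∃ y, G.neighborSet x = {y} then h.choose else x

lemma nbr_spec {G : SimpleGraph V} {x : V} (h : G.IsLeafVert x) :
    G.neighborSet x = {nbr G x} := by
  have h' : ∃ y, G.neighborSet x = {y} := Set.ncard_eq_one.mp h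
  rw [nbr, dif_pos h']; exact h'.choose_spec

lemma adj_nbr {G : SimpleGraph V} {x : V} (h : G.IsLeafVert x) : G.Adj x (nbr G x) := by
  have := nbr_spec h
  have : nbr G x ∈ G.neighborSet x := by rw [this]; rfl
  exact this

lemma eq_nbr_of_adj {G : SimpleGraph V} {x y : V} (h : G.IsLeafVert x) (hxy : G.Adj x y) :
    y = nbr G x := by
  have hy : y ∈ G.neighborSet x := hxy
  rw [nbr_spec h] at hy
  exact hy

lemma dist_le_of_mem_support {G : SimpleGraph V} {u y v : V} (p : G.Walk u y)
    (h : v ∈ p.support) : G.dist u v ≤ p.length :=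
  le_trans (SimpleGraph.dist_le (p.takeUntil v h)) (SimpleGraph.Walk.length_takeUntil_le p h)

/-- in a tree, a vertex has at most one neighbour not increasing the distance to `u`. -/
lemma tree_unique_down {G : SimpleGraph V} (hT : G.IsTree) {u x y1 y2 : V}
    (h1 : G.Adj x y1) (h2 : G.Adj x y2)
    (hd1 : G.dist u y1 ≤ G.dist u x) (hd2 : G.dist u y2 ≤ G.dist u x) : y1 = y2 := by
  have hconn := hT.isConnected
  -- build, for each i, a path from x to u through y i
  have key : ∀ (y : V), G.Adj x y → G.dist u y ≤ G.dist u x →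
      ∃ q : G.Walk y u, q.IsPath ∧ x ∉ q.support ∧ q.length = G.dist u y := by
    intro y hxy hdy
    obtain ⟨q, hq⟩ := hconn.exists_walk_length_eq_dist y u
    have hqp : q.IsPath := q.isPath_of_length_eq_dist (by rw [hq, SimpleGraph.dist_comm])
    refine ⟨q, hqp, ?_, by rw [hq, SimpleGraph.dist_comm]⟩
    intro hx
    have hsplit := q.take_spec hx
    have hlen : (q.takeUntil x hx).length + (q.dropUntil x hx).length = q.length := by
      rw [← SimpleGraph.Walk.length_append, hsplit]
    have h1' : G.dist x u ≤ (q.dropUntil x hx).length := SimpleGraph.dist_le _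
    have h2' : 1 ≤ (q.takeUntil x hx).length := by
      by_contra hc
      push_neg at hc
      interval_cases h : (q.takeUntil x hx).length
      · have := (q.takeUntil x hx).eq_of_length_eq_zero h
        exact G.ne_of_adj hxy this.symm
    have hq' : q.length = G.dist u y := by rw [hq, SimpleGraph.dist_comm]
    have hxu : G.dist x u = G.dist u x := SimpleGraph.dist_comm
    omega
  obtain ⟨q1, hq1, hx1, _⟩ := key y1 h1 hd1
  obtain ⟨q2, hq2, hx2, _⟩ := key y2 h2 hd2
  have hpq : (⟨SimpleGraph.Walk.cons h1 q1, hq1.cons hx1⟩ : G.Path x u)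
      = ⟨SimpleGraph.Walk.cons h2 q2, hq2.cons hx2⟩ :=
    hT.IsAcyclic.path_unique _ _
  have hw : SimpleGraph.Walk.cons h1 q1 = SimpleGraph.Walk.cons h2 q2 :=
    congrArg Subtype.val hpq
  have hsup : (SimpleGraph.Walk.cons h1 q1).support = (SimpleGraph.Walk.cons h2 q2).support := by
    rw [hw]
  rw [SimpleGraph.Walk.support_cons, SimpleGraph.Walk.support_cons,
    q1.support_eq_cons, q2.support_eq_cons] at hsup
  simp only [List.cons.injEq] at hsup
  exact hsup.2.1

lemma no_triangle {G : SimpleGraph V} (hT : G.IsTree) {a b c : V}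
    (hab : G.Adj a b) (hbc : G.Adj b c) (hac : G.Adj a c) : False := by
  have h1 : G.dist a a ≤ G.dist a c := by
    rw [SimpleGraph.dist_self]; exact Nat.zero_le _
  have h2 : G.dist a b ≤ G.dist a c := by
    rw [SimpleGraph.dist_eq_one_iff_adj.mpr hab, SimpleGraph.dist_eq_one_iff_adj.mpr hac]
  have := tree_unique_down hT (u := a) hac.symm hbc.symm h1 h2
  exact G.ne_of_adj hab this

lemma nbrSet_nonempty {G : SimpleGraph V} (hconn : G.Connected) {x v : V} (hvx : v ≠ x) :
    (G.neighborSet x).Nonempty := by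
  obtain ⟨w⟩ := hconn x v
  cases w with
  | nil => exact absurd rfl hvx.symm
  | cons h p => exact ⟨_, h⟩

lemma exists_up {G : SimpleGraph V} [Finite V] (hT : G.IsTree) {u x : V}
    (hx : ¬ G.IsLeafVert x) (hne : (G.neighborSet x).Nonempty) :
    ∃ y, G.Adj x y ∧ G.dist u y = G.dist u x + 1 := by
  have hfin : (G.neighborSet x).Finite := Set.toFinite _
  have h1 : 0 < (G.neighborSet x).ncard := (Set.ncard_pos hfin).mpr hne
  have hx' : (G.neighborSet x).ncard ≠ 1 := hx
  have h2 : 1 < (G.neighborSet x).ncard := by omega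
  obtain ⟨y1, y2, hy1, hy2, hne12⟩ := (Set.one_lt_ncard_iff hfin).mp h2
  have step : ∀ y, y ∈ G.neighborSet x → ¬ (G.dist u y ≤ G.dist u x) →
      ∃ y, G.Adj x y ∧ G.dist u y = G.dist u x + 1 := by
    intro y hy hgt
    push_neg at hgt
    refine ⟨y, hy, le_antisymm ?_ hgt⟩
    calc G.dist u y ≤ G.dist u x + G.dist x y := hT.isConnected.dist_triangle
    _ = G.dist u x + 1 := by rw [SimpleGraph.dist_eq_one_iff_adj.mpr hy]
  by_cases c1 : G.dist u y1 ≤ G.dist u x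
  · by_cases c2 : G.dist u y2 ≤ G.dist u x
    · exact absurd (tree_unique_down hT hy1 hy2 c1 c2) hne12
    · exact step y2 hy2 c2
  · exact step y1 hy1 c1

/-- some leaf is at maximal distance from `u` -/
lemma exists_leaf_ge {G : SimpleGraph V} [Fintype V] (hT : G.IsTree) {u : V}
    (hu : 2 ≤ (G.neighborSet u).ncard) (x : V) :
    ∃ y, G.IsLeafVert y ∧ G.dist u x ≤ G.dist u y := by
  obtain ⟨y, -, hy⟩ := Finset.exists_max_image Finset.univ (fun v => G.dist u v)
    ⟨x, Finset.mem_univ x⟩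
  refine ⟨y, ?_, hy x (Finset.mem_univ x)⟩
  by_contra hyl
  have hne : (G.neighborSet y).Nonempty := by
    by_cases hyu : y = u
    · have hu' : (G.neighborSet y).ncard ≠ 0 := by rw [hyu]; omega
      exact Set.nonempty_of_ncard_ne_zero hu'
    · exact nbrSet_nonempty hT.isConnected (Ne.symm hyu)
  obtain ⟨z, -, hz⟩ := exists_up hT (u := u) hyl hne
  have := hy z (Finset.mem_univ z)
  omega


lemma dist_leaf_eq {G : SimpleGraph V} (hconn : G.Connected) {x y : V}
    (hx : G.IsLeafVert x) (hxy : x ≠ y) :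
    G.dist x y = G.dist (nbr G x) y + 1 := by
  have hadj : G.Adj x (nbr G x) := adj_nbr hx
  have htri : G.dist x y ≤ G.dist x (nbr G x) + G.dist (nbr G x) y := hconn.dist_triangle
  rw [SimpleGraph.dist_eq_one_iff_adj.mpr hadj] at htri
  have hpos : 0 < G.dist x y := hconn.pos_dist_of_ne hxy
  obtain ⟨p, hp⟩ := hconn.exists_walk_length_eq_dist x y
  cases p with
  | nil =>
    rw [← hp] at hpos
    simp at hpos
  | cons h q =>
    have hb := eq_nbr_of_adj hx h
    have h2 : G.dist (nbr G x) y ≤ q.length := by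
      rw [← hb]; exact SimpleGraph.dist_le q
    rw [SimpleGraph.Walk.length_cons] at hp
    omega

lemma dist_two_of_common {G : SimpleGraph V} (hT : G.IsTree) {u w w' : V}
    (h : G.Adj u w) (h' : G.Adj u w') (hne : w ≠ w') : G.dist w w' = 2 := by
  have hle : G.dist w w' ≤ 2 := by
    have := SimpleGraph.dist_le
      (SimpleGraph.Walk.cons h.symm (SimpleGraph.Walk.cons h' SimpleGraph.Walk.nil))
    simpa using this
  have h0 : 0 < G.dist w w' := hT.isConnected.pos_dist_of_ne hne
  have h1 : G.dist w w' ≠ 1 := by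
    intro hc
    exact no_triangle hT h (SimpleGraph.dist_eq_one_iff_adj.mp hc) h'
  omega

noncomputable def pick (G : SimpleGraph V) (w : V) : V :=
  if h : ∃ x, G.IsLeafVert x ∧ G.Adj w x then h.choose else w

lemma pick_spec {G : SimpleGraph V} {w : V} (h : ∃ x, G.IsLeafVert x ∧ G.Adj w x) :
    G.IsLeafVert (pick G w) ∧ G.Adj w (pick G w) := by
  rw [pick, dif_pos h]; exact h.choose_spec

lemma ncard_filter_univ [Fintype V] (p : V → Prop) :
    Set.ncard {x | p x} = (Finset.univ.filter p).card := by
  classical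
  rw [Set.ncard_eq_toFinset_card']
  congr 1
  ext x
  simp



end StmtAux

open StmtAux in
/-- if `L` is a locally uniform 2-lobster of length `k = 0`, then
there exists an independent broadcast on `L` of cost `β*(L)`; in particular
`β_b(L) ≥ β*(L)`. -/
theorem stmt12 {V : Type*} [Fintype V] (G : SimpleGraph V)
    (hL : IsLobster G) (s : SpineEnum G 0) (hlu : LocallyUniform G s)
    (h2 : IsTwoLobster G s) :
    (∃ f : V → ℕ, IsIndepBroadcast G f ∧ bcost f = betaStar G s) ∧
    betaStar G s ≤ betaB G :=  by
  classical
  have hT := hL.1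
  have hconn := hT.isConnected
  set u := s.v 0 with huv
  have hspine : spineSet G = {u} := by
    ext x
    rw [s.mem x]
    constructor
    · rintro ⟨i, hi, rfl⟩
      have hi0 : i = 0 := Nat.le_zero.mp hi
      subst hi0
      rfl
    · rintro rfl
      exact ⟨0, le_rfl, rfl⟩
  have hoff : offSpine G = G := by
    ext a b
    simp only [offSpine, SimpleGraph.deleteEdges_adj, Set.mem_setOf_eq]
    constructor
    · exact fun hh => hh.1
    · intro hab
      refine ⟨hab, fun hall => ?_⟩
      have ha : a ∈ spineSet G := hall a (by simp)
      have hb : b ∈ spineSet G := hall b (by simp)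
      rw [hspine, Set.mem_singleton_iff] at ha hb
      exact hab.ne (ha.trans hb.symm)
  have hSsub : ∀ w : V, Ssub G w = Set.univ := by
    intro w
    apply Set.eq_univ_of_forall
    intro x
    show (offSpine G).Reachable w x
    rw [hoff]
    exact hconn w x
  have hW2 : 2 ≤ (G.neighborSet u).ncard := by
    have h2' := h2 0 le_rfl
    rwa [branchRoots, hoff] at h2'
  have hunl : ¬ G.IsLeafVert u := by
    intro h
    rw [SimpleGraph.IsLeafVert] at h
    omega
  have hnu3 : nu3 G s = 0 := by
    rw [nu3, Finset.card_eq_zero, Finset.filter_eq_empty_iff]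
    rintro i hi ⟨-, -, -, hlt, -⟩
    omega
  set LF : Finset V := Finset.univ.filter (fun x => G.IsLeafVert x) with hLF
  set Wb : Finset V := Finset.univ.filter (fun w => G.Adj u w) with hWb
  have hbdd : ∀ f : V → ℕ, IsIndepBroadcast G f → bcost f ≤ betaB G := by
    intro f hf
    apply le_csSup
    · refine ⟨∑ v, ecc G v, ?_⟩
      rintro c ⟨g, hg, rfl⟩
      exact Finset.sum_le_sum fun v _ => hg.1 v
    · exact ⟨f, hf, rfl⟩
  suffices main : ∃ f, IsIndepBroadcast G f ∧ bcost f = betaStar G s by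
    obtain ⟨f, hf, hc⟩ := main
    exact ⟨⟨f, hf, hc⟩, hc ▸ hbdd f hf⟩
  by_cases hS2 : typeS2 G u
  · -- type S2 case
    have hd2 : ∀ x, G.IsLeafVert x → G.dist u x = 2 := fun x hx =>
      hS2 x (by rw [hSsub]; trivial) hx
    have hlne : ∀ x, G.IsLeafVert x → x ≠ u := fun x hx h => hunl (h ▸ hx)
    have hnadj : ∀ x, G.IsLeafVert x → ¬ G.Adj u x := by
      intro x hx h
      have hd := hd2 x hx
      rw [SimpleGraph.dist_eq_one_iff_adj.mpr h] at hd
      omega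
    have hnbru : ∀ x, G.IsLeafVert x → G.Adj u (nbr G x) := by
      intro x hx
      obtain ⟨p, hp⟩ := hconn.exists_walk_length_eq_dist u x
      rw [hd2 x hx] at hp
      cases p with
      | nil => simp at hp
      | cons h q =>
        cases q with
        | nil => simp at hp
        | cons h' q' =>
          have hq0 : q'.length = 0 := by
            simp only [SimpleGraph.Walk.length_cons] at hp
            omega
          have hcx := q'.eq_of_length_eq_zero hq0
          subst hcx
          have hb := eq_nbr_of_adj hx h'.symm
          rw [← hb]
          exact h
    have hnbr_not_leaf : ∀ w, G.Adj u w → ¬ G.IsLeafVert w := by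
      intro w hw hl
      have hd := hd2 w hl
      rw [SimpleGraph.dist_eq_one_iff_adj.mpr hw] at hd
      omega
    have hdepth : ∀ x, G.dist u x ≤ 2 := by
      intro x
      obtain ⟨y, hy, hxy⟩ := exists_leaf_ge hT hW2 x
      have := hd2 y hy
      omega
    set B : V → Finset V :=
      fun w => Finset.univ.filter (fun x => G.IsLeafVert x ∧ nbr G x = w) with hB
    have hBmem : ∀ x w, x ∈ B w ↔ G.IsLeafVert x ∧ nbr G x = w := by
      intro x w
      simp [hB]
    have hWmem : ∀ w, w ∈ Wb ↔ G.Adj u w := by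
      intro w
      simp [hWb]
    have hbranch_eq : ∀ w, branchTwoLeaves G u w = {x | G.IsLeafVert x ∧ nbr G x = w} := by
      intro w
      ext x
      simp only [branchTwoLeaves, Set.mem_setOf_eq]
      constructor
      · rintro ⟨hwx, hxu, hx⟩
        exact ⟨hx, (eq_nbr_of_adj hx hwx.symm).symm⟩
      · rintro ⟨hx, hnb⟩
        exact ⟨by rw [← hnb]; exact (adj_nbr hx).symm, hlne x hx, hx⟩
    have hbcard : ∀ w, (branchTwoLeaves G u w).ncard = (B w).card := by
      intro w
      rw [hbranch_eq w, ncard_filter_univ]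
      apply congrArg Finset.card
      ext x
      simp [hB]
    have hBne : ∀ w, G.Adj u w → ∃ x, x ∈ B w := by
      intro w hw
      have hnl := hnbr_not_leaf w hw
      have hfin : (G.neighborSet w).Finite := Set.toFinite _
      have hp1 : 0 < (G.neighborSet w).ncard := (Set.ncard_pos hfin).mpr ⟨u, hw.symm⟩
      have hp2 : (G.neighborSet w).ncard ≠ 1 := hnl
      obtain ⟨x, hx, hxu⟩ :=
        Set.exists_ne_of_one_lt_ncard (s := G.neighborSet w) (by omega) u
      have hwx : G.Adj w x := hx
      have hxl : G.IsLeafVert x := by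
        by_contra hc
        have hne : (G.neighborSet x).Nonempty := ⟨w, hwx.symm⟩
        obtain ⟨y, -, hy⟩ := exists_up hT (u := u) hc hne
        have hdy := hdepth y
        have hdx : G.dist u x = 2 := by
          have hle := hdepth x
          have h0 : 0 < G.dist u x := hconn.pos_dist_of_ne (Ne.symm hxu)
          have h1' : G.dist u x ≠ 1 := by
            intro hc1
            exact no_triangle hT hw hwx (SimpleGraph.dist_eq_one_iff_adj.mp hc1)
          omega
        omega
      exact ⟨x, (hBmem x w).mpr ⟨hxl, (eq_nbr_of_adj hxl hwx.symm).symm⟩⟩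
    have hB1 : ∀ w, G.Adj u w → 1 ≤ (B w).card := by
      intro w hw
      obtain ⟨x, hx⟩ := hBne w hw
      exact Finset.card_pos.mpr ⟨x, hx⟩
    have hpickspec : ∀ w, G.Adj u w →
        G.IsLeafVert (pick G w) ∧ nbr G (pick G w) = w := by
      intro w hw
      obtain ⟨x, hx⟩ := hBne w hw
      rw [hBmem] at hx
      have hex : ∃ z, G.IsLeafVert z ∧ G.Adj w z :=
        ⟨x, hx.1, by rw [← hx.2]; exact (adj_nbr hx.1).symm⟩
      obtain ⟨hl, hadj⟩ := pick_spec hex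
      exact ⟨hl, (eq_nbr_of_adj hl hadj.symm).symm⟩
    have hpickmem : ∀ w, G.Adj u w → pick G w ∈ B w := by
      intro w hw
      obtain ⟨hl, hnb⟩ := hpickspec w hw
      exact (hBmem _ w).mpr ⟨hl, hnb⟩
    have hWcard : 2 ≤ Wb.card := by
      have hW : (G.neighborSet u).ncard = Wb.card := by
        rw [hWb]
        exact ncard_filter_univ _
      omega
    have hdsame : ∀ x y, G.IsLeafVert x → G.IsLeafVert y → x ≠ y → nbr G x = nbr G y →
        G.dist x y = 2 := by
      intro x y hx hy hxy hnb
      rw [dist_leaf_eq hconn hx hxy, hnb]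
      rw [SimpleGraph.dist_eq_one_iff_adj.mpr (adj_nbr hy).symm]
    have hddiff : ∀ x y, G.IsLeafVert x → G.IsLeafVert y → nbr G x ≠ nbr G y →
        G.dist x y = 4 := by
      intro x y hx hy hnb
      have hxy : x ≠ y := fun h => hnb (by rw [h])
      have hyn : y ≠ nbr G x := by
        intro h
        exact hnbr_not_leaf (nbr G x) (hnbru x hx) (h ▸ hy)
      rw [dist_leaf_eq hconn hx hxy,
        SimpleGraph.dist_comm (G := G) (u := nbr G x) (v := y),
        dist_leaf_eq hconn hy hyn,
        dist_two_of_common hT (hnbru y hy) (hnbru x hx) (Ne.symm hnb)]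
    have hecc3 : ∀ x, G.IsLeafVert x → 3 ≤ ecc G x := by
      intro x hx
      obtain ⟨w', hw'W, hww'⟩ :=
        Finset.exists_mem_ne (by omega : 1 < Wb.card) (nbr G x)
      have hw' : G.Adj u w' := (hWmem w').mp hw'W
      obtain ⟨hpl, hpnb⟩ := hpickspec w' hw'
      have hd4 : G.dist x (pick G w') = 4 :=
        hddiff x _ hx hpl (by rw [hpnb]; exact Ne.symm hww')
      calc (3:ℕ) ≤ G.dist x (pick G w') := by omega
      _ ≤ ecc G x := Finset.le_sup (Finset.mem_univ _)
    -- counting infrastructure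
    have hmaps : ∀ x ∈ LF, nbr G x ∈ Wb := by
      intro x hx
      rw [hLF, Finset.mem_filter] at hx
      rw [hWmem]
      exact hnbru x hx.2
    have hfiber : ∀ g : V → ℕ,
        ∑ w ∈ Wb, ∑ x ∈ LF.filter (fun x => nbr G x = w), g x = ∑ x ∈ LF, g x :=
      fun g => Finset.sum_fiberwise_of_maps_to hmaps g
    have hfilter_eq : ∀ w, LF.filter (fun x => nbr G x = w) = B w := by
      intro w
      rw [hLF, hB, Finset.filter_filter]
    have hLFcard : LF.card = ∑ w ∈ Wb, (B w).card := by
      have h1 := hfiber (fun _ => (1:ℕ))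
      simp only [Finset.sum_const, smul_eq_mul, mul_one] at h1
      rw [← h1]
      apply Finset.sum_congr rfl
      intro w hw
      rw [hfilter_eq w]
    have hlam1 : lam1L G = 0 := by
      rw [lam1L]
      have hset : oneLeavesL G = ∅ := by
        ext x
        simp only [oneLeavesL, Set.mem_setOf_eq, hspine, Set.mem_empty_iff_false, iff_false,
          not_and]
        rintro hx ⟨y, hy, hadj⟩
        rw [Set.mem_singleton_iff] at hy
        exact hnadj x hx (hy ▸ hadj)
      rw [hset, Set.ncard_empty]
    have hlam2 : lam2L G = LF.card := by
      rw [lam2L]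
      have hset : twoLeavesL G = {x | G.IsLeafVert x} := by
        ext x
        simp only [twoLeavesL, Set.mem_setOf_eq, hspine]
        constructor
        · exact fun h => h.1
        · intro h
          refine ⟨h, ?_⟩
          rintro ⟨y, hy, hadj⟩
          rw [Set.mem_singleton_iff] at hy
          exact hnadj x h (hy ▸ hadj)
      rw [hset, ncard_filter_univ]
    have hzset : ∀ w, Set.ncard {z | G.Adj w z ∧ G.IsLeafVert z} = (B w).card := by
      intro w
      have hset : {z | G.Adj w z ∧ G.IsLeafVert z} = {z | G.IsLeafVert z ∧ nbr G z = w} := by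
        ext z
        simp only [Set.mem_setOf_eq]
        constructor
        · rintro ⟨hwz, hz⟩
          exact ⟨hz, (eq_nbr_of_adj hz hwz.symm).symm⟩
        · rintro ⟨hz, hnb⟩
          exact ⟨by rw [← hnb]; exact (adj_nbr hz).symm, hz⟩
      rw [hset, ncard_filter_univ]
      apply congrArg Finset.card
      ext z
      simp [hB]
    have honly : ∀ x, G.IsLeafVert x → (IsOnlyLeaf G x ↔ (B (nbr G x)).card = 1) := by
      intro x hx
      constructor
      · rintro ⟨-, h⟩
        have h' := h (nbr G x) (adj_nbr hx)
        rwa [hzset (nbr G x)] at h'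
      · intro h
        refine ⟨hx, fun y hy => ?_⟩
        rw [← eq_nbr_of_adj hx hy] at h
        rwa [hzset y]
    have hlam2star : lam2starL G = ∑ w ∈ Wb, (if (B w).card = 1 then 1 else 0) := by
      rw [lam2starL]
      have hseteq : {x | x ∈ twoLeavesL G ∧ IsOnlyLeaf G x}
          = {x | G.IsLeafVert x ∧ (B (nbr G x)).card = 1} := by
        ext x
        simp only [Set.mem_setOf_eq, twoLeavesL, hspine]
        constructor
        · rintro ⟨⟨hx, -⟩, ho⟩
          exact ⟨hx, (honly x hx).mp ho⟩
        · rintro ⟨hx, h1⟩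
          refine ⟨⟨hx, ?_⟩, (honly x hx).mpr h1⟩
          rintro ⟨y, hy, hadj⟩
          rw [Set.mem_singleton_iff] at hy
          exact hnadj x hx (hy ▸ hadj)
      rw [hseteq]
      have hff : {x | G.IsLeafVert x ∧ (B (nbr G x)).card = 1}.ncard
          = (LF.filter (fun x => (B (nbr G x)).card = 1)).card := by
        rw [ncard_filter_univ]
        apply congrArg Finset.card
        ext x
        simp [hLF]
      rw [hff]
      have hmq : ∀ x ∈ LF.filter (fun x => (B (nbr G x)).card = 1), nbr G x ∈ Wb :=
        fun x hx => hmaps x (Finset.mem_filter.mp hx).1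
      rw [Finset.card_eq_sum_card_fiberwise hmq]
      apply Finset.sum_congr rfl
      intro w hw
      by_cases hone : (B w).card = 1
      · rw [if_pos hone]
        have heq : (LF.filter (fun x => (B (nbr G x)).card = 1)).filter
            (fun x => nbr G x = w) = B w := by
          ext x
          simp only [Finset.mem_filter, hLF, Finset.mem_univ, true_and, hBmem]
          constructor
          · rintro ⟨⟨h1, -⟩, h3⟩
            exact ⟨h1, h3⟩
          · rintro ⟨h1, h3⟩
            exact ⟨⟨h1, by rw [h3]; exact hone⟩, h3⟩
        rw [heq, hone]
      · rw [if_neg hone]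
        have heq : (LF.filter (fun x => (B (nbr G x)).card = 1)).filter
            (fun x => nbr G x = w) = ∅ := by
          ext x
          simp only [Finset.mem_filter, Finset.notMem_empty, iff_false, not_and]
          rintro ⟨-, h2⟩ h3
          rw [h3] at h2
          exact hone h2
        rw [heq, Finset.card_empty]
    have hnu2S : nu2 G s = ∑ w ∈ Wb, (if (B w).card ≤ 2 then 1 else 0) := by
      rw [nu2, Finset.sum_range_one, ← huv, if_pos hS2]
      have hsb : smallBranches G u = {w | G.Adj u w ∧ (B w).card ≤ 2} := by
        ext w
        simp only [smallBranches, branchRoots, hoff, Set.mem_setOf_eq,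
          SimpleGraph.mem_neighborSet, hbcard]
      rw [hsb, ncard_filter_univ, Finset.card_filter, hWb, Finset.sum_filter]
      apply Finset.sum_congr rfl
      intro x _
      by_cases h1 : G.Adj u x <;> by_cases hc2 : (B x).card ≤ 2 <;> simp [h1, hc2]
    by_cases hFA : ∀ w, G.Adj u w → 3 ≤ (B w).card
    · -- FA subcase
      have hFAfull : typeFA G u := by
        refine ⟨hS2, ?_⟩
        intro w hw
        rw [branchRoots, hoff] at hw
        rw [hbcard]
        exact hFA w hw
      have hT4 : isT4 G s 0 0 := by
        refine ⟨by omega, ?_, ?_, ?_, ?_, ?_, ?_, ?_, ?_⟩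
        · intro m hm
          have hm0 : m = 0 := Nat.le_zero.mp hm
          subst hm0
          show typeFA G (s.v (0 + 2 * 0))
          exact hFAfull
        · intro m hm
          exact absurd hm (by omega)
        · rintro ⟨h, -⟩
          omega
        · rintro ⟨h, -⟩
          omega
        · intro h
          exact absurd h (by omega)
        · intro h
          exact absurd h (by omega)
        · intro h
          exact absurd h (by omega)
        · intro h
          exact absurd h (by omega)
      have hsmall0 : smallBranches G u = ∅ := by
        ext w
        simp only [smallBranches, branchRoots, hoff, Set.mem_setOf_eq,
          SimpleGraph.mem_neighborSet, Set.mem_empty_iff_false, iff_false, not_and]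
        intro hw hle
        have h3 := hFA w hw
        rw [hbcard] at hle
        omega
      have hnu4 : nu4 G s = 1 := by
        rw [nu4, Finset.sum_range_one, Finset.sum_range_one, if_pos hT4]
        have hfe : (Finset.range (2 * 0 + 1)).filter
            (fun m => typeXb G (s.v (0 + m)) ∨ typeXc G s (0 + m)) = ∅ := by
          rw [Finset.filter_eq_empty_iff]
          intro m hm
          rw [Finset.mem_range] at hm
          have hm0 : m = 0 := by omega
          subst hm0
          rintro (hxb | hxc)
          · have h1 := hxb.2
            have hsmall0' : smallBranches G (s.v (0 + 0)) = ∅ := hsmall0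
            rw [hsmall0', Set.ncard_empty] at h1
            omega
          · have := hxc.2.2.1
            omega
        rw [hfe]
        simp
      refine ⟨fun x => if x = u then 1 else if G.IsLeafVert x then 1 else 0, ⟨?_, ?_⟩, ?_⟩
      · -- broadcast
        intro v
        show (if v = u then 1 else if G.IsLeafVert v then 1 else 0) ≤ ecc G v
        obtain ⟨w0, hw0⟩ : ∃ w0, G.Adj u w0 := by
          obtain ⟨w0, hw0⟩ := Set.nonempty_of_ncard_ne_zero
            (s := G.neighborSet u) (by omega)
          exact ⟨w0, hw0⟩
        by_cases hv : v = u
        · rw [if_pos hv]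
          have hadj : G.Adj v w0 := by rw [hv]; exact hw0
          calc (1:ℕ) = G.dist v w0 := (SimpleGraph.dist_eq_one_iff_adj.mpr hadj).symm
          _ ≤ ecc G v := Finset.le_sup (Finset.mem_univ _)
        · rw [if_neg hv]
          by_cases hl : G.IsLeafVert v
          · rw [if_pos hl]
            have hdv : G.dist v u = 2 := by
              rw [SimpleGraph.dist_comm]
              exact hd2 v hl
            calc (1:ℕ) ≤ G.dist v u := by omega
            _ ≤ ecc G v := Finset.le_sup (Finset.mem_univ _)
          · rw [if_neg hl]
            exact Nat.zero_le _
      · -- independence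
        intro x y hxy hx hy
        have hx' : 0 < (if x = u then 1 else if G.IsLeafVert x then 1 else 0 : ℕ) := hx
        have hy' : 0 < (if y = u then 1 else if G.IsLeafVert y then 1 else 0 : ℕ) := hy
        have hval : ∀ z : V, 0 < (if z = u then 1 else if G.IsLeafVert z then 1 else 0 : ℕ) →
            (if z = u then 1 else if G.IsLeafVert z then 1 else 0 : ℕ) = 1
              ∧ (z = u ∨ G.IsLeafVert z) := by
          intro z hz
          split_ifs at hz ⊢ with hz1 hz2
          · exact ⟨rfl, Or.inl hz1⟩
          · exact ⟨rfl, Or.inr hz2⟩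
          · omega
        obtain ⟨hfx, hcx⟩ := hval x hx'
        obtain ⟨hfy, hcy⟩ := hval y hy'
        show max (if x = u then 1 else if G.IsLeafVert x then 1 else 0)
          (if y = u then 1 else if G.IsLeafVert y then 1 else 0) < G.dist x y
        rw [hfx, hfy]
        have hgoal : 1 < G.dist x y := by
          rcases hcx with rfl | hlx
          · rcases hcy with rfl | hly
            · exact absurd rfl hxy
            · have := hd2 y hly
              omega
          · rcases hcy with rfl | hly
            · have h2x := hd2 x hlx
              rw [SimpleGraph.dist_comm]
              omega
            · by_cases hnb : nbr G x = nbr G y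
              · have := hdsame x y hlx hly hxy hnb
                omega
              · have := hddiff x y hlx hly hnb
                omega
        simpa using hgoal
      · -- cost
        have hb : bcost (fun x => if x = u then 1 else if G.IsLeafVert x then 1 else 0)
            = ∑ v, (if v = u then 1 else if G.IsLeafVert v then 1 else 0 : ℕ) := rfl
        have hsplit : ∀ v : V, (if v = u then 1 else if G.IsLeafVert v then 1 else 0 : ℕ)
            = (if v = u then 1 else 0) + (if G.IsLeafVert v then 1 else 0) := by
          intro v
          by_cases h1 : v = u
          · rw [if_pos h1, if_pos h1]
            subst h1
            rw [if_neg hunl]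
          · rw [if_neg h1, if_neg h1, Nat.zero_add]
        have hz1 : ∑ w ∈ Wb, (if (B w).card = 1 then (1:ℕ) else 0) = 0 := by
          apply Finset.sum_eq_zero
          intro w hw
          have := hFA w ((hWmem w).mp hw)
          rw [if_neg (by omega)]
        have hz2 : ∑ w ∈ Wb, (if (B w).card ≤ 2 then (1:ℕ) else 0) = 0 := by
          apply Finset.sum_eq_zero
          intro w hw
          have := hFA w ((hWmem w).mp hw)
          rw [if_neg (by omega)]
        rw [hb, Finset.sum_congr rfl (fun v _ => hsplit v), Finset.sum_add_distrib]
        have hone : ∑ v : V, (if v = u then (1:ℕ) else 0) = 1 := by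
          simp
        have hlfc : ∑ v : V, (if G.IsLeafVert v then (1:ℕ) else 0) = LF.card :=
          (Finset.card_filter _ _).symm
        rw [hone, hlfc, betaStar, hlam1, hlam2, hlam2star, hnu2S, hnu3, hnu4, hz1, hz2]
        omega
    · -- non-FA subcase
      have hnu4 : nu4 G s = 0 := by
        rw [nu4, Finset.sum_range_one, Finset.sum_range_one, if_neg]
        intro h4
        have hfa := h4.2.1 0 le_rfl
        push_neg at hFA
        obtain ⟨w, hw, hcard⟩ := hFA
        have hbcard2 : ∀ w, (branchTwoLeaves G (s.v (0 + 2 * 0)) w).ncard = (B w).card := hbcard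
        have h3 := hfa.2 w (by rw [branchRoots, hoff]; exact hw)
        rw [hbcard2] at h3
        omega
      set f : V → ℕ := fun z => if G.IsLeafVert z then
          (if (B (nbr G z)).card ≤ 2 then (if z = pick G (nbr G z) then 3 else 0) else 1)
          else 0 with hfdef
      have hfz : ∀ z, f z = if G.IsLeafVert z then
          (if (B (nbr G z)).card ≤ 2 then (if z = pick G (nbr G z) then 3 else 0) else 1)
          else 0 := fun z => rfl
      refine ⟨f, ⟨?_, ?_⟩, ?_⟩
      · -- broadcast
        intro v
        by_cases hv : G.IsLeafVert v
        · have h3 := hecc3 v hv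
          have hle : f v ≤ 3 := by
            rw [hfz v]
            split_ifs <;> omega
          omega
        · have hv0 : f v = 0 := by rw [hfz v, if_neg hv]
          rw [hv0]
          exact Nat.zero_le _
      · -- independence
        intro x y hxy hx hy
        have hlx : G.IsLeafVert x := by
          by_contra h
          rw [show f x = 0 from by rw [hfz x, if_neg h]] at hx
          omega
        have hly : G.IsLeafVert y := by
          by_contra h
          rw [show f y = 0 from by rw [hfz y, if_neg h]] at hy
          omega
        have hfb : ∀ z, f z ≤ 3 := by
          intro z
          rw [hfz z]
          split_ifs <;> omega
        by_cases hnb : nbr G x = nbr G y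
        · by_cases hsm : (B (nbr G x)).card ≤ 2
          · have hxp : x = pick G (nbr G x) := by
              by_contra hc
              rw [hfz x, if_pos hlx, if_pos hsm, if_neg hc] at hx
              omega
            have hyp : y = pick G (nbr G y) := by
              by_contra hc
              rw [hfz y, if_pos hly, if_pos (by rw [← hnb]; exact hsm), if_neg hc] at hy
              omega
            rw [hnb] at hxp
            exact absurd (hxp.trans hyp.symm) hxy
          · have hfx : f x = 1 := by
              rw [hfz x, if_pos hlx, if_neg hsm]
            have hfy : f y = 1 := by
              rw [hfz y, if_pos hly, if_neg (by rw [← hnb]; exact hsm)]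
            have hd := hdsame x y hlx hly hxy hnb
            rw [hfx, hfy, hd]
            norm_num
        · have hd := hddiff x y hlx hly hnb
          have hm : max (f x) (f y) ≤ 3 := max_le (hfb x) (hfb y)
          omega
      · -- cost
        have hb : bcost f = ∑ x ∈ LF, f x := by
          rw [bcost, ← Finset.sum_filter_add_sum_filter_not Finset.univ
            (fun x => G.IsLeafVert x) f]
          have hz : ∑ x ∈ Finset.univ.filter (fun x => ¬ G.IsLeafVert x), f x = 0 := by
            apply Finset.sum_eq_zero
            intro x hx
            rw [Finset.mem_filter] at hx
            rw [hfz x, if_neg hx.2]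
          rw [hz, ← hLF, Nat.add_zero]
        have hcost : ∑ x ∈ LF, f x
            = ∑ w ∈ Wb, (if (B w).card ≤ 2 then 3 else (B w).card) := by
          rw [← hfiber f]
          apply Finset.sum_congr rfl
          intro w hw
          rw [hfilter_eq w]
          have hw' : G.Adj u w := (hWmem w).mp hw
          by_cases hsm : (B w).card ≤ 2
          · rw [if_pos hsm]
            have hcong : ∀ x ∈ B w, f x = if x = pick G w then 3 else 0 := by
              intro x hx
              obtain ⟨hx1, hx2⟩ := (hBmem x w).mp hx
              rw [hfz x, if_pos hx1, hx2, if_pos hsm]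
            rw [Finset.sum_congr rfl hcong, Finset.sum_ite_eq' (B w) (pick G w) (fun _ => 3),
              if_pos (hpickmem w hw')]
          · rw [if_neg hsm]
            have hcong : ∀ x ∈ B w, f x = 1 := by
              intro x hx
              obtain ⟨hx1, hx2⟩ := (hBmem x w).mp hx
              rw [hfz x, if_pos hx1, hx2, if_neg hsm]
            rw [Finset.sum_congr rfl hcong, Finset.sum_const, smul_eq_mul, mul_one]
        have hper : ∀ w ∈ Wb, (if (B w).card ≤ 2 then 3 else (B w).card)
            = (B w).card + ((if (B w).card = 1 then 1 else 0)
              + (if (B w).card ≤ 2 then 1 else 0)) := by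
          intro w hw
          have h1 := hB1 w ((hWmem w).mp hw)
          split_ifs <;> omega
        rw [hb, hcost, Finset.sum_congr rfl hper, Finset.sum_add_distrib,
          Finset.sum_add_distrib, betaStar, hlam1, hlam2, hlam2star, hnu2S, hnu3, hnu4,
          hLFcard]
        omega
  · -- type S1 case
    have hS1 : typeS1 G u := by
      rcases hlu 0 le_rfl with h | h
      · exact h
      · exact absurd h hS2
    have hS1' : ∀ x, G.IsLeafVert x → G.Adj u x := by
      intro x hx
      have hd := hS1 x (by rw [hSsub]; trivial) hx
      exact SimpleGraph.dist_eq_one_iff_adj.mp hd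
    have hleafex : ∃ x, G.IsLeafVert x := by
      obtain ⟨y, hy, -⟩ := exists_leaf_ge hT hW2 u
      exact ⟨y, hy⟩
    refine ⟨fun x => if G.IsLeafVert x then 1 else 0, ⟨?_, ?_⟩, ?_⟩
    · -- broadcast
      intro v
      show (if G.IsLeafVert v then 1 else 0) ≤ ecc G v
      by_cases hv : G.IsLeafVert v
      · rw [if_pos hv]
        have hd : G.dist v u = 1 := by
          rw [SimpleGraph.dist_comm]
          exact SimpleGraph.dist_eq_one_iff_adj.mpr (hS1' v hv)
      
        calc (1:ℕ) = G.dist v u := hd.symm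
        _ ≤ ecc G v := Finset.le_sup (Finset.mem_univ u)
      · rw [if_neg hv]; exact Nat.zero_le _
    · -- independence
      intro x y hxy hx hy
      have hx' : 0 < if G.IsLeafVert x then 1 else 0 := hx
      have hy' : 0 < if G.IsLeafVert y then 1 else 0 := hy
      have hlx : G.IsLeafVert x := by by_contra h; simp [h] at hx'
      have hly : G.IsLeafVert y := by by_contra h; simp [h] at hy'
      have hdxy : G.dist x y = 2 := by
        have hnx : nbr G x = u := (eq_nbr_of_adj hlx (hS1' x hlx).symm).symm
        rw [dist_leaf_eq hconn hlx hxy, hnx,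
          SimpleGraph.dist_eq_one_iff_adj.mpr (hS1' y hly)]
      show max (if G.IsLeafVert x then 1 else 0) (if G.IsLeafVert y then 1 else 0) < G.dist x y
      rw [hdxy, if_pos hlx, if_pos hly]
      norm_num
    · -- cost
      have hb : bcost (fun x => if G.IsLeafVert x then 1 else 0)
          = ∑ v, (if G.IsLeafVert v then 1 else 0) := rfl
      have hsum : ∑ v, (if G.IsLeafVert v then (1:ℕ) else 0) = LF.card :=
        (Finset.card_filter _ _).symm
      have h1 : lam1L G = LF.card := by
        rw [lam1L]
        have hset : oneLeavesL G = {x | G.IsLeafVert x} := by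
          ext x
          simp only [oneLeavesL, Set.mem_setOf_eq, hspine]
          constructor
          · exact fun h => h.1
          · intro h
            exact ⟨h, u, Set.mem_singleton u, hS1' x h⟩
        rw [hset, ncard_filter_univ]
      have h2' : lam2L G = 0 := by
        rw [lam2L]
        have hset : twoLeavesL G = ∅ := by
          ext x
          simp only [twoLeavesL, Set.mem_setOf_eq, hspine, Set.mem_empty_iff_false, iff_false,
            not_and]
          intro hx hno
          exact hno ⟨u, Set.mem_singleton u, hS1' x hx⟩
        rw [hset, Set.ncard_empty]
      have h3' : lam2starL G = 0 := by
        rw [lam2starL]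
        have hset : {x | x ∈ twoLeavesL G ∧ IsOnlyLeaf G x} = ∅ := by
          ext x
          simp only [twoLeavesL, Set.mem_setOf_eq, hspine, Set.mem_empty_iff_false, iff_false,
            not_and]
          rintro ⟨hx, hno⟩
          exact absurd ⟨u, Set.mem_singleton u, hS1' x hx⟩ hno
        rw [hset, Set.ncard_empty]
      have h4' : nu2 G s = 0 := by
        rw [nu2, Finset.sum_range_one, ← huv, if_neg hS2]
      have h5' : nu4 G s = 0 := by
        rw [nu4, Finset.sum_range_one, Finset.sum_range_one, if_neg]
        intro hT4
        have hfa := hT4.2.1 0 le_rfl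
        norm_num at hfa
        exact hS2 hfa.1
      rw [hb, hsum, betaStar, h1, h2', h3', h4', h5', hnu3]
      omega
end
end
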